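/- arXiv:1702.08525 — 13 statements merged into one kernel-verified Lean document; each statement's English description precedes it below -/
import Mathlib

section
/- Let R be a commutative ring and M a faithful multiplication R-module with at least two nontrivial ideals of R. Then the M-intersection graph G_M(R) is a complete graph if and only if M is a uniform module (i.e., any two nonzero submodules of M have nonzero intersection). -/
/-- The `M`-intersection graph of ideals of `R`: vertices are the nontrivial ideals of `R`,
and two distinct vertices `I`, `J` are adjacent iff `IM ∩ JM ≠ 0`. -/
def interGraph (R M : Type*) [CommRing R] [AddCommGroup M] [Module R M] :
    SimpleGraph {I : Ideal R // I ≠ ⊥ ∧ I ≠ ⊤} where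
  Adj I J := I ≠ J ∧ (I.1 • ⊤ ⊓ J.1 • ⊤ : Submodule R M) ≠ ⊥
  symm := ⟨fun I J h => ⟨h.1.symm, by rw [inf_comm]; exact h.2⟩⟩
  loopless := ⟨fun I h => h.1 rfl⟩

/-! Over a faithful multiplication module, `I ↦ IM` is a monotone map from ideals onto
submodules that sends only `0` to `0`. Uniformity of `M` therefore says that `IM ∩ JM ≠ 0` for all nonzero ideals `I`, `J`; the pairs missing from the graph
(`I = J`, or one of them equal to `R`) are comparable, and for comparable nonzero ideals the
intersection is the smaller of `IM`, `JM`, hence nonzero anyway. -/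

section

variable {R M : Type*} [CommRing R] [AddCommGroup M] [Module R M]

theorem smul_top_eq_bot_iff_of_annihilator_top_eq_bot
    (hfaith : (⊤ : Submodule R M).annihilator = ⊥) {I : Ideal R} :
    I • (⊤ : Submodule R M) = ⊥ ↔ I = ⊥ := by
  rw [← Submodule.le_annihilator_iff, hfaith, le_bot_iff]

theorem smul_top_inf_smul_top_ne_bot_of_le (hfaith : (⊤ : Submodule R M).annihilator = ⊥)
    {I J : Ideal R} (hI : I ≠ ⊥) (hIJ : I ≤ J) :
    (I • ⊤ ⊓ J • ⊤ : Submodule R M) ≠ ⊥ := by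
  rw [inf_eq_left.2 (Submodule.smul_mono_left hIJ)]
  exact (smul_top_eq_bot_iff_of_annihilator_top_eq_bot hfaith).not.2 hI

theorem interGraph_eq_top_iff :
    interGraph R M = ⊤ ↔ ∀ I J : {I : Ideal R // I ≠ ⊥ ∧ I ≠ ⊤}, I ≠ J →
      (I.1 • ⊤ ⊓ J.1 • ⊤ : Submodule R M) ≠ ⊥ := by
  simp only [SimpleGraph.ext_iff, funext_iff, interGraph, SimpleGraph.top_adj, eq_iff_iff,
    and_iff_left_iff_imp]

theorem forall_ne_bot_smul_top_inf_ne_bot_iff (hfaith : (⊤ : Submodule R M).annihilator = ⊥) :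
    (∀ I J : Ideal R, I ≠ ⊥ → J ≠ ⊥ → (I • ⊤ ⊓ J • ⊤ : Submodule R M) ≠ ⊥) ↔
      ∀ I J : {I : Ideal R // I ≠ ⊥ ∧ I ≠ ⊤}, I ≠ J →
        (I.1 • ⊤ ⊓ J.1 • ⊤ : Submodule R M) ≠ ⊥ := by
  refine ⟨fun h I J _ => h I J I.2.1 J.2.1, fun h I J hI hJ => ?_⟩
  by_cases hcomp : I ≤ J ∨ J ≤ I
  · rcases hcomp with hIJ | hJI
    · exact smul_top_inf_smul_top_ne_bot_of_le hfaith hI hIJ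
    · rw [inf_comm]
      exact smul_top_inf_smul_top_ne_bot_of_le hfaith hJ hJI
  · rw [not_or] at hcomp
    refine h ⟨I, hI, ?_⟩ ⟨J, hJ, ?_⟩ (fun hIJ => hcomp.1 (congrArg Subtype.val hIJ).le)
    · rintro rfl
      exact hcomp.2 le_top
    · rintro rfl
      exact hcomp.1 le_top

theorem forall_inf_ne_bot_iff_of_forall_eq_smul_top
    (hmul : ∀ N : Submodule R M, ∃ I : Ideal R, N = I • ⊤) :
    (∀ N K : Submodule R M, N ≠ ⊥ → K ≠ ⊥ → N ⊓ K ≠ ⊥) ↔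
      ∀ I J : Ideal R, (I • ⊤ : Submodule R M) ≠ ⊥ → (J • ⊤ : Submodule R M) ≠ ⊥ →
        (I • ⊤ ⊓ J • ⊤ : Submodule R M) ≠ ⊥ := by
  refine ⟨fun h I J => h _ _, fun h N K => ?_⟩
  obtain ⟨I, rfl⟩ := hmul N
  obtain ⟨J, rfl⟩ := hmul K
  exact h I J

end

theorem complete_iff_uniform_general (R M : Type*) [CommRing R] [AddCommGroup M] [Module R M]
    (hfaith : (⊤ : Submodule R M).annihilator = ⊥)
    (hmul : ∀ N : Submodule R M, ∃ I : Ideal R, N = I • ⊤) :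
    interGraph R M = ⊤ ↔
      ∀ N K : Submodule R M, N ≠ ⊥ → K ≠ ⊥ → N ⊓ K ≠ ⊥ := by
  rw [interGraph_eq_top_iff, forall_inf_ne_bot_iff_of_forall_eq_smul_top hmul,
    ← forall_ne_bot_smul_top_inf_ne_bot_iff hfaith]
  simp only [ne_eq, smul_top_eq_bot_iff_of_annihilator_top_eq_bot hfaith]

/-- For a faithful multiplication module `M` over a commutative ring `R`
having at least two nontrivial ideals, the `M`-intersection graph `G_M(R)` is complete
iff `M` is a uniform module. -/
theorem complete_iff_uniform (R M : Type*) [CommRing R] [AddCommGroup M] [Module R M]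
    [Nontrivial M]
    (hfaith : (⊤ : Submodule R M).annihilator = ⊥)
    (hmul : ∀ N : Submodule R M, ∃ I : Ideal R, N = I • ⊤)
    (htwo : ∃ I J : {I : Ideal R // I ≠ ⊥ ∧ I ≠ ⊤}, I ≠ J) :
    interGraph R M = ⊤ ↔
      ∀ N K : Submodule R M, N ≠ ⊥ → K ≠ ⊥ → N ⊓ K ≠ ⊥ :=
  complete_iff_uniform_general R M hfaith hmul
end

section
/- Let R be a commutative ring and M a multiplication R-module. Then the diameter of the M-intersection graph G_M(R) belongs to {0, 1, 2, ∞}. -/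
lemma ENat.eq_zero_or_eq_one_or_eq_two_of_le_two {n : ℕ∞} (h : n ≤ 2) :
    n = 0 ∨ n = 1 ∨ n = 2 := by
  induction n using ENat.recTopCoe with
  | top => simp at h
  | coe n =>
    norm_cast at h ⊢
    omega

namespace Submodule

variable {R M : Type*} [CommRing R] [AddCommGroup M] [Module R M]

lemma smul_top_le_of_sup_eq_top_of_inf_eq_bot (I : Ideal R) {N₁ N₂ : Submodule R M}
    (hsup : N₁ ⊔ N₂ = ⊤) (hinf : I • ⊤ ⊓ N₂ = ⊥) : I • ⊤ ≤ N₁ := by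
  have hN₂ : I • N₂ = ⊥ :=
    le_bot_iff.mp (hinf ▸ le_inf (smul_mono_right _ le_top) smul_le_right)
  calc I • ⊤ = I • N₁ ⊔ I • N₂ := by rw [← smul_sup, hsup]
    _ = I • N₁ := by rw [hN₂, sup_bot_eq]
    _ ≤ N₁ := smul_le_right

end Submodule

namespace interGraph

variable {R M : Type*} [CommRing R] [AddCommGroup M] [Module R M]
  {u v w : {I : Ideal R // I ≠ ⊥ ∧ I ≠ ⊤}}

lemma smul_top_ne_bot_of_adj (h : (interGraph R M).Adj u v) :
    (u.1 • ⊤ : Submodule R M) ≠ ⊥ :=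
  fun hu => h.2 (by rw [hu, bot_inf_eq])

lemma smul_top_ne_bot_of_reachable (h : (interGraph R M).Reachable u v) (huv : u ≠ v) :
    (u.1 • ⊤ : Submodule R M) ≠ ⊥ :=
  let ⟨p⟩ := h
  smul_top_ne_bot_of_adj (p.adj_snd (p.not_nil_of_ne huv))

lemma edist_le_one_of_inf_ne_bot (h : (u.1 • ⊤ ⊓ v.1 • ⊤ : Submodule R M) ≠ ⊥) :
    (interGraph R M).edist u v ≤ 1 := by
  rw [SimpleGraph.edist_le_one_iff_adj_or_eq]
  by_cases huv : u = v
  · exact Or.inr huv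
  · exact Or.inl ⟨huv, h⟩

lemma edist_le_two_of_inf_ne_bot (hu : (u.1 • ⊤ ⊓ w.1 • ⊤ : Submodule R M) ≠ ⊥)
    (hv : (w.1 • ⊤ ⊓ v.1 • ⊤ : Submodule R M) ≠ ⊥) :
    (interGraph R M).edist u v ≤ 2 :=
  calc (interGraph R M).edist u v
      ≤ (interGraph R M).edist u w + (interGraph R M).edist w v :=
        SimpleGraph.edist_triangle
    _ ≤ 1 + 1 := add_le_add (edist_le_one_of_inf_ne_bot hu) (edist_le_one_of_inf_ne_bot hv)
    _ = 2 := one_add_one_eq_two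

lemma exists_inf_ne_bot_of_sup_ne_top
    (hmul : ∀ N : Submodule R M, ∃ I : Ideal R, N = I • ⊤)
    (hu : (u.1 • ⊤ : Submodule R M) ≠ ⊥) (hv : (v.1 • ⊤ : Submodule R M) ≠ ⊥)
    (hsup : (u.1 • ⊤ ⊔ v.1 • ⊤ : Submodule R M) ≠ ⊤) :
    ∃ w : {I : Ideal R // I ≠ ⊥ ∧ I ≠ ⊤},
      (u.1 • ⊤ ⊓ w.1 • ⊤ : Submodule R M) ≠ ⊥ ∧ (w.1 • ⊤ ⊓ v.1 • ⊤ : Submodule R M) ≠ ⊥ := by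
  obtain ⟨K, hK⟩ := hmul (u.1 • ⊤ ⊔ v.1 • ⊤)
  have hK_ne_bot : K ≠ ⊥ := by
    rintro rfl
    rw [Submodule.bot_smul, sup_eq_bot_iff] at hK
    exact hu hK.1
  have hK_ne_top : K ≠ ⊤ := by
    rintro rfl
    rw [Submodule.top_smul] at hK
    exact hsup hK
  refine ⟨⟨K, hK_ne_bot, hK_ne_top⟩, ?_, ?_⟩
  · rwa [← hK, inf_sup_self]
  · rwa [← hK, inf_eq_right.mpr le_sup_right]

lemma exists_inf_ne_bot_of_sup_eq_top (p : (interGraph R M).Walk u v)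
    (hinf : (u.1 • ⊤ ⊓ v.1 • ⊤ : Submodule R M) = ⊥) (hv : (v.1 • ⊤ : Submodule R M) ≠ ⊥)
    (hsup : (u.1 • ⊤ ⊔ v.1 • ⊤ : Submodule R M) = ⊤) :
    ∃ w : {I : Ideal R // I ≠ ⊥ ∧ I ≠ ⊤},
      (u.1 • ⊤ ⊓ w.1 • ⊤ : Submodule R M) ≠ ⊥ ∧ (w.1 • ⊤ ⊓ v.1 • ⊤ : Submodule R M) ≠ ⊥ := by
  obtain ⟨d, -, hd_fst, hd_snd⟩ :=
    p.exists_boundary_dart {w | (w.1 • ⊤ ⊓ v.1 • ⊤ : Submodule R M) = ⊥} hinf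
      fun h => hv (by simpa only [Set.mem_ofPred_eq, inf_idem] using h)
  have hd_le : (d.fst.1 • ⊤ : Submodule R M) ≤ u.1 • ⊤ :=
    Submodule.smul_top_le_of_sup_eq_top_of_inf_eq_bot _ hsup hd_fst
  refine ⟨d.snd, fun h => d.adj.2 (le_bot_iff.mp ?_), hd_snd⟩
  exact h ▸ inf_le_inf_right _ hd_le

lemma edist_le_two_of_reachable (hmul : ∀ N : Submodule R M, ∃ I : Ideal R, N = I • ⊤)
    (h : (interGraph R M).Reachable u v) : (interGraph R M).edist u v ≤ 2 := by
  by_cases hinf : (u.1 • ⊤ ⊓ v.1 • ⊤ : Submodule R M) = ⊥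
  · obtain rfl | huv := eq_or_ne u v
    · simp
    have hu := smul_top_ne_bot_of_reachable h huv
    have hv := smul_top_ne_bot_of_reachable h.symm huv.symm
    obtain ⟨w, huw, hwv⟩ := (em ((u.1 • ⊤ ⊔ v.1 • ⊤ : Submodule R M) = ⊤)).elim
      (exists_inf_ne_bot_of_sup_eq_top h.some hinf hv) (exists_inf_ne_bot_of_sup_ne_top hmul hu hv)
    exact edist_le_two_of_inf_ne_bot huw hwv
  · exact (edist_le_one_of_inf_ne_bot hinf).trans one_le_two

end interGraph

theorem ediam_mem_general (R M : Type*) [CommRing R] [AddCommGroup M] [Module R M]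
    (hmul : ∀ N : Submodule R M, ∃ I : Ideal R, N = I • ⊤) :
    (interGraph R M).ediam = 0 ∨ (interGraph R M).ediam = 1 ∨
      (interGraph R M).ediam = 2 ∨ (interGraph R M).ediam = ⊤ := by
  by_cases hG : (interGraph R M).Preconnected
  · have h2 : (interGraph R M).ediam ≤ 2 := SimpleGraph.ediam_le_of_edist_le
      fun _ _ => interGraph.edist_le_two_of_reachable hmul (hG _ _)
    rcases ENat.eq_zero_or_eq_one_or_eq_two_of_le_two h2 with h | h | h <;> simp [h]
  · exact Or.inr (Or.inr (Or.inr (SimpleGraph.ediam_eq_top_of_not_preconnected hG)))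

/-- If `M` is a multiplication module over a commutative ring `R`, then the
diameter of `G_M(R)` lies in `{0, 1, 2, ∞}`. -/
theorem ediam_mem (R M : Type*) [CommRing R] [AddCommGroup M] [Module R M] [Nontrivial M]
    (hmul : ∀ N : Submodule R M, ∃ I : Ideal R, N = I • ⊤) :
    (interGraph R M).ediam = 0 ∨ (interGraph R M).ediam = 1 ∨
      (interGraph R M).ediam = 2 ∨ (interGraph R M).ediam = ⊤ :=
  ediam_mem_general R M hmul
end

section
/- Let R be a commutative ring and M a multiplication R-module. If the M-intersection graph G_M(R) is connected and regular of finite degree (i.e., there is a natural number k such that every vertex has exactly k neighbors), then G_M(R) is a complete graph. -/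
/-!
If `G_M(R)` is connected but not complete, it contains an induced path `X - Y - Z`. Since `M` is
a multiplication module, `XM ∩ YM = LM` for an ideal `L`, which is again a vertex. As `LM ⊆ YM`,
every neighbour of `L` other than `Y` is a neighbour of `Y`, and `Y` has the two further
neighbours `L` and `Z`, which `L` lacks. So `deg Y > deg L`, contradicting regularity.
-/

namespace SimpleGraph

variable {V : Type*} {G : SimpleGraph V}

theorem Connected.exists_adj_adj_not_adj_ne_of_ne_top (h : G.Connected) (hG : G ≠ ⊤) :
    ∃ x a b, G.Adj x a ∧ G.Adj a b ∧ ¬G.Adj x b ∧ x ≠ b := by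
  obtain ⟨u, v, hne, hnadj⟩ := ne_top_iff_exists_not_adj.mp hG
  obtain ⟨p, hp⟩ := h.exists_walk_length_eq_dist u v
  exact p.exists_adj_adj_not_adj_ne hp (h.one_lt_dist_of_ne_of_not_adj hne hnadj)

theorem ncard_neighborSet_lt_of_neighborSet_diff_subset {l y z : V} (hly : G.Adj l y)
    (hyz : G.Adj y z) (hlz : ¬G.Adj l z) (hne : l ≠ z)
    (hsub : G.neighborSet l \ {y} ⊆ G.neighborSet y) (hfin : (G.neighborSet y).Finite) :
    (G.neighborSet l).ncard < (G.neighborSet y).ncard := by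
  have hlfin : (G.neighborSet l \ {y}).Finite := hfin.subset hsub
  have hins : insert z (insert l (G.neighborSet l \ {y})) ⊆ G.neighborSet y := by
    rintro a (rfl | rfl | ha)
    exacts [hyz, hly.symm, hsub ha]
  have hcard : (insert z (insert l (G.neighborSet l \ {y}))).ncard =
      (G.neighborSet l \ {y}).ncard + 2 := by
    rw [Set.ncard_insert_of_notMem _ (hlfin.insert l),
      Set.ncard_insert_of_notMem (fun h => G.loopless.irrefl l h.1) hlfin]
    rintro (rfl | h)
    exacts [hne rfl, hlz h.1]
  have hle := Set.ncard_le_ncard hins hfin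
  have hl : (G.neighborSet l \ {y}).ncard + 1 = (G.neighborSet l).ncard :=
    Set.ncard_sdiff_singleton_add_one hly (hlfin.of_sdiff (Set.finite_singleton y))
  omega

end SimpleGraph

section interGraph

variable {R M : Type*} [CommRing R] [AddCommGroup M] [Module R M]

theorem interGraph_adj_of_smul_top_le {I J A : {I : Ideal R // I ≠ ⊥ ∧ I ≠ ⊤}}
    (hIJ : (I.1 • ⊤ : Submodule R M) ≤ J.1 • ⊤) (hIA : (interGraph R M).Adj I A) (hJA : J ≠ A) :
    (interGraph R M).Adj J A :=
  ⟨hJA, ne_bot_of_le_ne_bot hIA.2 (inf_le_inf_right _ hIJ)⟩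

theorem exists_vertex_smul_top_eq (hmul : ∀ N : Submodule R M, ∃ I : Ideal R, N = I • ⊤)
    {N : Submodule R M} (h0 : N ≠ ⊥) (h1 : N ≠ ⊤) :
    ∃ L : {I : Ideal R // I ≠ ⊥ ∧ I ≠ ⊤}, L.1 • ⊤ = N := by
  obtain ⟨L, rfl⟩ := hmul N
  refine ⟨⟨L, ?_, ?_⟩, rfl⟩ <;> rintro rfl
  exacts [h0 (Submodule.bot_smul ⊤), h1 (Submodule.top_smul ⊤)]

theorem exists_ncard_neighborSet_interGraph_lt
    (hmul : ∀ N : Submodule R M, ∃ I : Ideal R, N = I • ⊤) {X Y Z : {I : Ideal R // I ≠ ⊥ ∧ I ≠ ⊤}}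
    (hXY : (interGraph R M).Adj X Y) (hYZ : (interGraph R M).Adj Y Z)
    (hXZ : ¬(interGraph R M).Adj X Z) (hXZne : X ≠ Z)
    (hfin : ((interGraph R M).neighborSet Y).Finite) :
    ∃ L, ((interGraph R M).neighborSet L).ncard < ((interGraph R M).neighborSet Y).ncard := by
  have hXZ_bot : (X.1 • ⊤ ⊓ Z.1 • ⊤ : Submodule R M) = ⊥ := not_not.1 fun h => hXZ ⟨hXZne, h⟩
  have hZ : (Z.1 • ⊤ : Submodule R M) ≠ ⊥ := ne_bot_of_le_ne_bot hYZ.2 inf_le_right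
  have hXY_top : (X.1 • ⊤ ⊓ Y.1 • ⊤ : Submodule R M) ≠ ⊤ := fun h =>
    hZ (eq_bot_iff.2 (hXZ_bot ▸ le_inf (le_top.trans (h.ge.trans inf_le_left)) le_rfl))
  obtain ⟨L, hL⟩ := exists_vertex_smul_top_eq hmul hXY.2 hXY_top
  have hL0 : (L.1 • ⊤ : Submodule R M) ≠ ⊥ := hL ▸ hXY.2
  have hLY : (L.1 • ⊤ : Submodule R M) ≤ Y.1 • ⊤ := hL ▸ inf_le_right
  have hLZ : (L.1 • ⊤ ⊓ Z.1 • ⊤ : Submodule R M) = ⊥ :=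
    eq_bot_iff.2 (hXZ_bot ▸ inf_le_inf_right _ (hL ▸ inf_le_left))
  have hLneY : L ≠ Y := by rintro rfl; exact hYZ.2 hLZ
  have hLneZ : L ≠ Z := by rintro rfl; exact hL0 (by rwa [inf_idem] at hLZ)
  refine ⟨L, SimpleGraph.ncard_neighborSet_lt_of_neighborSet_diff_subset
    ⟨hLneY, by rwa [inf_eq_left.2 hLY]⟩ hYZ (fun h => h.2 hLZ) hLneZ ?_ hfin⟩
  exact fun A hA => interGraph_adj_of_smul_top_le hLY hA.1 fun h => hA.2 h.symm

end interGraph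

theorem complete_of_connected_regular_general (R M : Type*) [CommRing R] [AddCommGroup M] [Module R M]
    (hmul : ∀ N : Submodule R M, ∃ I : Ideal R, N = I • ⊤)
    (hconn : (interGraph R M).Connected)
    (hreg : ∃ k : ℕ, ∀ v, ((interGraph R M).neighborSet v).Finite ∧
      ((interGraph R M).neighborSet v).ncard = k) :
    interGraph R M = ⊤ := by
  by_contra hne
  obtain ⟨k, hk⟩ := hreg
  obtain ⟨X, Y, Z, hXY, hYZ, hXZ, hXZne⟩ := hconn.exists_adj_adj_not_adj_ne_of_ne_top hne
  obtain ⟨L, hlt⟩ := exists_ncard_neighborSet_interGraph_lt hmul hXY hYZ hXZ hXZne (hk Y).1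
  rw [(hk L).2, (hk Y).2] at hlt
  exact lt_irrefl k hlt

/-- If `M` is a multiplication module over a commutative ring `R` and
`G_M(R)` is a connected regular graph of finite degree, then `G_M(R)` is complete. -/
theorem complete_of_connected_regular (R M : Type*) [CommRing R] [AddCommGroup M] [Module R M]
    [Nontrivial M]
    (hmul : ∀ N : Submodule R M, ∃ I : Ideal R, N = I • ⊤)
    (hconn : (interGraph R M).Connected)
    (hreg : ∃ k : ℕ, ∀ v, ((interGraph R M).neighborSet v).Finite ∧
      ((interGraph R M).neighborSet v).ncard = k) :
    interGraph R M = ⊤ :=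
  complete_of_connected_regular_general R M hmul hconn hreg
end

section
/- Let R be a commutative ring and M a multiplication R-module. Then the girth of the M-intersection graph G_M(R) is either 3 or ∞; that is, if G_M(R) contains a cycle, it contains a triangle. -/
/-!
Suppose `G_M(R)` has a cycle but no triangle. For an edge `I — J`, write `IM ∩ JM = KM`;
unless `K` is `I` or `J` (or `R`), `K` is a third vertex adjacent to both, so `IM` and `JM`
are comparable. A cycle contains a path `a — b — c — d` with `a ≠ c` and `b ≠ d`; without
triangles `aM ∩ cM = 0 = bM ∩ dM`, and then `bM ⊆ cM` forces `aM ∩ bM = 0`, while `cM ⊆ bM`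
forces `cM ∩ dM = 0`.
-/

namespace SimpleGraph

variable {α : Type*} {G : SimpleGraph α}

lemma egirth_eq_three_of_not_cliqueFree_three (h : ¬ G.CliqueFree 3) : G.egirth = 3 :=
  le_antisymm
    (calc G.egirth ≤ (⊤ : SimpleGraph (Fin 3)).egirth :=
          ((not_cliqueFree_iff_top_isContained 3).1 h).egirth_le
      _ = 3 := egirth_top (by simp))
    three_le_egirth

lemma CliqueFree.not_adj_of_adj_of_adj (hG : G.CliqueFree 3) {a b c : α}
    (hab : G.Adj a b) (hbc : G.Adj b c) : ¬ G.Adj a c := by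
  classical
  exact fun hac => hG {a, b, c} (is3Clique_triple_iff.2 ⟨hab, hac, hbc⟩)

lemma exists_adj_adj_adj_of_not_isAcyclic (h : ¬ G.IsAcyclic) :
    ∃ a b c d, G.Adj a b ∧ G.Adj b c ∧ G.Adj c d ∧ a ≠ c ∧ b ≠ d := by
  obtain ⟨u, p, hp⟩ : ∃ u, ∃ p : G.Walk u u, p.IsCycle := by
    simpa [IsAcyclic] using h
  have hlen := hp.three_le_length
  exact ⟨p.getVert 0, p.getVert 1, p.getVert 2, p.getVert 3,
    p.adj_getVert_succ (by omega), p.adj_getVert_succ (by omega), p.adj_getVert_succ (by omega),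
    hp.getVert_sub_one_ne_getVert_add_one (i := 1) (by omega),
    hp.getVert_sub_one_ne_getVert_add_one (i := 2) (by omega)⟩

end SimpleGraph

open SimpleGraph

section interGraph

variable {R M : Type*} [CommRing R] [AddCommGroup M] [Module R M]

lemma interGraph_adj_of_le {I J : {I : Ideal R // I ≠ ⊥ ∧ I ≠ ⊤}} (hIJ : I ≠ J)
    (hle : (I.1 • ⊤ : Submodule R M) ≤ J.1 • ⊤) (hI : (I.1 • ⊤ : Submodule R M) ≠ ⊥) :
    (interGraph R M).Adj I J :=
  ⟨hIJ, by rwa [inf_of_le_left hle]⟩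

lemma interGraph_inf_eq_bot_of_adj_of_adj (hG : (interGraph R M).CliqueFree 3)
    {I J K : {I : Ideal R // I ≠ ⊥ ∧ I ≠ ⊤}} (hIJ : (interGraph R M).Adj I J)
    (hJK : (interGraph R M).Adj J K) (hIK : I ≠ K) :
    (I.1 • ⊤ ⊓ K.1 • ⊤ : Submodule R M) = ⊥ := by
  by_contra h
  exact hG.not_adj_of_adj_of_adj hIJ hJK ⟨hIK, h⟩

lemma interGraph_le_or_le_of_adj (hmul : ∀ N : Submodule R M, ∃ I : Ideal R, N = I • ⊤)
    (hG : (interGraph R M).CliqueFree 3) {I J : {I : Ideal R // I ≠ ⊥ ∧ I ≠ ⊤}}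
    (hIJ : (interGraph R M).Adj I J) :
    (I.1 • ⊤ : Submodule R M) ≤ J.1 • ⊤ ∨ (J.1 • ⊤ : Submodule R M) ≤ I.1 • ⊤ := by
  rw [← inf_eq_left, ← inf_eq_right]
  by_contra! hne
  obtain ⟨K, hK⟩ := hmul (I.1 • ⊤ ⊓ J.1 • ⊤)
  have hK_bot : K ≠ ⊥ := by
    rintro rfl
    exact hIJ.2 (hK.trans (Submodule.bot_smul _))
  have hK_top : K ≠ ⊤ := by
    rintro rfl
    rw [Submodule.top_smul] at hK
    exact hne.1 (le_antisymm inf_le_left (le_top.trans hK.ge))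
  let L : {I : Ideal R // I ≠ ⊥ ∧ I ≠ ⊤} := ⟨K, hK_bot, hK_top⟩
  have hLI : (interGraph R M).Adj L I :=
    interGraph_adj_of_le (fun e => hne.1 (by rw [hK, ← e])) (hK ▸ inf_le_left) (hK ▸ hIJ.2)
  have hLJ : (interGraph R M).Adj L J :=
    interGraph_adj_of_le (fun e => hne.2 (by rw [hK, ← e])) (hK ▸ inf_le_right) (hK ▸ hIJ.2)
  exact hG.not_adj_of_adj_of_adj hLI hIJ hLJ

lemma interGraph_not_cliqueFree_three_of_not_isAcyclic
    (hmul : ∀ N : Submodule R M, ∃ I : Ideal R, N = I • ⊤)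
    (hcyc : ¬ (interGraph R M).IsAcyclic) : ¬ (interGraph R M).CliqueFree 3 := by
  intro hG
  obtain ⟨a, b, c, d, hab, hbc, hcd, hac, hbd⟩ := exists_adj_adj_adj_of_not_isAcyclic hcyc
  rcases interGraph_le_or_le_of_adj hmul hG hbc with hle | hle
  · exact hab.2 <| le_bot_iff.1 <|
      (inf_le_inf_left _ hle).trans (interGraph_inf_eq_bot_of_adj_of_adj hG hab hbc hac).le
  · exact hcd.2 <| le_bot_iff.1 <|
      (inf_le_inf_right _ hle).trans (interGraph_inf_eq_bot_of_adj_of_adj hG hbc hcd hbd).le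

end interGraph

theorem egirth_eq_three_or_top_general (R M : Type*) [CommRing R] [AddCommGroup M] [Module R M]
    (hmul : ∀ N : Submodule R M, ∃ I : Ideal R, N = I • ⊤) :
    (interGraph R M).egirth = 3 ∨ (interGraph R M).egirth = ⊤ := by
  by_cases hcyc : (interGraph R M).IsAcyclic
  · exact Or.inr hcyc.egirth_eq_top
  · exact Or.inl <| egirth_eq_three_of_not_cliqueFree_three <|
      interGraph_not_cliqueFree_three_of_not_isAcyclic hmul hcyc

/-- If `M` is a multiplication module over a commutative ring `R`, then the
girth of `G_M(R)` is either `3` or `∞`. -/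
theorem egirth_eq_three_or_top (R M : Type*) [CommRing R] [AddCommGroup M] [Module R M]
    [Nontrivial M]
    (hmul : ∀ N : Submodule R M, ∃ I : Ideal R, N = I • ⊤) :
    (interGraph R M).egirth = 3 ∨ (interGraph R M).egirth = ⊤ :=
  egirth_eq_three_or_top_general R M hmul
end

section
/- Let R be a commutative ring and M a nonzero R-module. If a nontrivial ideal I of R is an isolated vertex of the M-intersection graph G_M(R) (i.e., IM ∩ JM = 0 for every nontrivial ideal J ≠ I), then I is a maximal ideal of R or I ⊆ ann(M). -/
/-- If a nontrivial ideal `I` of a commutative ring `R` is an isolated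
vertex of the `M`-intersection graph `G_M(R)` of a nonzero module `M`, then `I` is a maximal
ideal or `I ⊆ ann(M)`. -/
theorem isolated_vertex_maximal_or_le_annihilator (R M : Type*) [CommRing R] [AddCommGroup M]
    [Module R M] [Nontrivial M]
    (I : Ideal R) (hI : I ≠ ⊥) (hI' : I ≠ ⊤)
    (hiso : ∀ J : Ideal R, J ≠ ⊥ → J ≠ ⊤ → J ≠ I →
      (I • ⊤ ⊓ J • ⊤ : Submodule R M) = ⊥) :
    I.IsMaximal ∨ I ≤ (⊤ : Submodule R M).annihilator := by
  by_cases hmax : I.IsMaximal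
  · exact Or.inl hmax
  · right
    obtain ⟨m, hm, hIm⟩ := Ideal.exists_le_maximal I hI'
    have hmI : m ≠ I := fun h => hmax (h ▸ hm)
    have hmbot : m ≠ ⊥ := fun h => hI (le_bot_iff.mp (h ▸ hIm))
    have h0 := hiso m hmbot hm.ne_top hmI
    have hle : (I • ⊤ : Submodule R M) ≤ m • ⊤ :=
      Submodule.smul_mono_left hIm
    have hIM : (I • ⊤ : Submodule R M) = ⊥ := by
      rw [← h0, inf_eq_left.mpr hle]
    intro r hr
    rw [Submodule.mem_annihilator]
    intro n _
    have : r • n ∈ (I • ⊤ : Submodule R M) :=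
      Submodule.smul_mem_smul hr trivial
    rwa [hIM, Submodule.mem_bot] at this
end

section
/- Let R be a commutative ring and M a nonzero R-module, and let I be a nontrivial ideal of R that is an isolated vertex of the M-intersection graph G_M(R) (i.e., IM ∩ JM = 0 for every nontrivial ideal J ≠ I). If I is not contained in ann(M), then I = Ra for every element a ∈ I with a ∉ ann(M). -/
/-- Let `I` be a nontrivial ideal of a commutative ring `R` which is an
isolated vertex of `G_M(R)` for a nonzero module `M`. If `I ⊈ ann(M)`, then `I = Ra` for
every `a ∈ I` with `a ∉ ann(M)`. -/
theorem isolated_vertex_principal (R M : Type*) [CommRing R] [AddCommGroup M]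
    [Module R M] [Nontrivial M]
    (I : Ideal R) (hI : I ≠ ⊥) (hI' : I ≠ ⊤)
    (hiso : ∀ J : Ideal R, J ≠ ⊥ → J ≠ ⊤ → J ≠ I →
      (I • ⊤ ⊓ J • ⊤ : Submodule R M) = ⊥)
    (hann : ¬ I ≤ (⊤ : Submodule R M).annihilator) :
    ∀ a ∈ I, a ∉ (⊤ : Submodule R M).annihilator → I = Ideal.span {a} := by
  intro a haI ha
  set J := Ideal.span ({a} : Set R) with hJ
  -- a ≠ 0 since a ∉ ann(M)
  have ha0 : a ≠ 0 := by
    rintro rfl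
    exact ha (by simp [Submodule.mem_annihilator])
  have hJbot : J ≠ ⊥ := by
    simp [hJ, Ideal.span_eq_bot, ha0]
  have hJI : J ≤ I := by
    simpa [hJ, Ideal.span_le] using haI
  have hJtop : J ≠ ⊤ := fun h => hI' (top_le_iff.mp (h ▸ hJI))
  by_contra hne
  have hne' : J ≠ I := fun h => hne (h ▸ rfl)
  have hzero := hiso J hJbot hJtop hne'
  have hle : (J • ⊤ : Submodule R M) ≤ I • ⊤ := Submodule.smul_mono_left hJI
  have hJM : (J • ⊤ : Submodule R M) = ⊥ := by
    exact le_bot_iff.mp (hzero ▸ le_inf hle le_rfl)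
  apply ha
  rw [Submodule.mem_annihilator]
  intro m
  have : a • m ∈ (J • ⊤ : Submodule R M) :=
    Submodule.smul_mem_smul (Ideal.subset_span rfl) trivial
  simpa [hJM] using this
end

section
/- Let R be a commutative ring and M a faithful R-module. If the M-intersection graph G_M(R) is a null graph (it has no edges, i.e., IM ∩ JM = 0 for all distinct nontrivial ideals I, J of R), then every nontrivial ideal of R is a maximal ideal and R has at most two nontrivial ideals. -/
/-- If `M` is a faithful module over a commutative ring `R` and `G_M(R)` has
no edges, then every nontrivial ideal of `R` is maximal and `R` has at most two nontrivial
ideals. -/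
theorem null_graph_structure (R M : Type*) [CommRing R] [AddCommGroup M] [Module R M]
    [Nontrivial M]
    (hfaith : (⊤ : Submodule R M).annihilator = ⊥)
    (hnull : ∀ I J : Ideal R, I ≠ ⊥ → I ≠ ⊤ → J ≠ ⊥ → J ≠ ⊤ → I ≠ J →
      (I • ⊤ ⊓ J • ⊤ : Submodule R M) = ⊥) :
    (∀ I : Ideal R, I ≠ ⊥ → I ≠ ⊤ → I.IsMaximal) ∧
      {I : Ideal R | I ≠ ⊥ ∧ I ≠ ⊤}.encard ≤ 2 := by
  classical
  -- faithfulness: nonzero ideals have nonzero image in M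
  have hIM : ∀ I : Ideal R, I ≠ ⊥ → (I • ⊤ : Submodule R M) ≠ ⊥ := by
    intro I hI h
    apply hI
    rw [eq_bot_iff]
    intro r hr
    rw [← hfaith, Submodule.mem_annihilator]
    intro m _
    have hm : r • m ∈ (I • ⊤ : Submodule R M) := Submodule.smul_mem_smul hr trivial
    rw [h] at hm
    exact hm
  -- no comparable distinct nontrivial ideals
  have hncomp : ∀ I J : Ideal R, I ≠ ⊥ → I ≠ ⊤ → J ≠ ⊥ → J ≠ ⊤ → I ≠ J → ¬ I ≤ J := by
    intro I J hI hI' hJ hJ' hne hle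
    have h1 : (I • ⊤ : Submodule R M) ≤ J • ⊤ := Submodule.smul_mono_left hle
    have := hnull I J hI hI' hJ hJ' hne
    rw [inf_eq_left.2 h1] at this
    exact hIM I hI this
  -- maximality
  have hmax : ∀ I : Ideal R, I ≠ ⊥ → I ≠ ⊤ → I.IsMaximal := by
    intro I hI hI'
    refine ⟨⟨hI', fun J hJ => ?_⟩⟩
    by_contra hJ'
    have hJb : J ≠ ⊥ := fun h => hI (le_bot_iff.1 (h ▸ hJ.le))
    exact hncomp I J hI hI' hJb hJ' (ne_of_lt hJ) hJ.le
  refine ⟨hmax, ?_⟩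
  -- pairwise trivial intersection
  have hinf : ∀ I J : Ideal R, I ≠ ⊥ → I ≠ ⊤ → J ≠ ⊥ → J ≠ ⊤ → I ≠ J → I ⊓ J = ⊥ := by
    intro I J hI hI' hJ hJ' hne
    by_contra h
    have h1 : I ⊓ J ≠ I := fun he => hncomp I J hI hI' hJ hJ' hne (he ▸ inf_le_right)
    have h2 : I ⊓ J ≠ ⊤ := fun he => hI' (top_le_iff.1 (he ▸ inf_le_left))
    have := hnull (I ⊓ J) I h h2 hI hI' h1
    rw [inf_eq_left.2 (Submodule.smul_mono_left inf_le_left)] at this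
    exact hIM _ h this
  -- pairwise comaximal
  have hsup : ∀ I J : Ideal R, I ≠ ⊥ → I ≠ ⊤ → J ≠ ⊥ → J ≠ ⊤ → I ≠ J → I ⊔ J = ⊤ := by
    intro I J hI hI' hJ hJ' hne
    by_contra h
    have h1 : I ≠ I ⊔ J := fun he => hncomp J I hJ hJ' hI hI' (Ne.symm hne)
      (by rw [he]; exact le_sup_right)
    have h2 : I ⊔ J ≠ ⊥ := fun he => hI (le_bot_iff.1 (he ▸ le_sup_left))
    have := hnull I (I ⊔ J) hI hI' h2 h h1
    rw [inf_eq_left.2 (Submodule.smul_mono_left le_sup_left)] at this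
    exact hIM I hI this
  set S := {I : Ideal R | I ≠ ⊥ ∧ I ≠ ⊤} with hS
  by_cases he : S = ∅
  · simp [he]
  obtain ⟨I₀, hI₀⟩ := Set.nonempty_iff_ne_empty.2 he
  by_cases hs : S ⊆ {I₀}
  · calc S.encard ≤ ({I₀} : Set (Ideal R)).encard := Set.encard_mono hs
      _ = 1 := Set.encard_singleton _
      _ ≤ 2 := by norm_num
  obtain ⟨J₀, hJ₀, hJne⟩ := Set.not_subset.1 hs
  simp only [Set.mem_singleton_iff] at hJne
  have hsub : S ⊆ {I₀, J₀} := by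
    intro K hK
    by_contra hKne
    simp only [Set.mem_insert_iff, Set.mem_singleton_iff, not_or] at hKne
    obtain ⟨hK1, hK2⟩ := hKne
    -- three distinct nontrivial ideals: contradiction
    obtain ⟨hKb, hKt⟩ := hK
    obtain ⟨hIb, hIt⟩ := hI₀
    obtain ⟨hJb, hJt⟩ := hJ₀
    have hIK : I₀ ⊔ K = ⊤ := hsup I₀ K hIb hIt hKb hKt (Ne.symm hK1)
    have h1 : (1 : R) ∈ I₀ ⊔ K := hIK ▸ Submodule.mem_top
    obtain ⟨i, hi, k, hk, hik⟩ := Submodule.mem_sup.1 h1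
    obtain ⟨j, hjmem, hj0⟩ := Submodule.exists_mem_ne_zero_of_ne_bot hJb
    have hji : j * i ∈ (J₀ ⊓ I₀ : Ideal R) :=
      ⟨Ideal.mul_mem_right i _ hjmem, Ideal.mul_mem_left I₀ j hi⟩
    have hjk : j * k ∈ (J₀ ⊓ K : Ideal R) :=
      ⟨Ideal.mul_mem_right k _ hjmem, Ideal.mul_mem_left K j hk⟩
    rw [hinf J₀ I₀ hJb hJt hIb hIt hJne] at hji
    rw [hinf J₀ K hJb hJt hKb hKt (Ne.symm hK2)] at hjk
    have : j = j * i + j * k := by rw [← mul_add, hik, mul_one]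
    rw [Submodule.mem_bot] at hji hjk
    rw [hji, hjk, add_zero] at this
    exact hj0 this
  calc S.encard ≤ ({I₀, J₀} : Set (Ideal R)).encard := Set.encard_mono hsub
    _ = 2 := Set.encard_pair (Ne.symm hJne)
end

section
/- Let R be a commutative ring and M a faithful R-module. If the clique number ω(G_M(R)) of the M-intersection graph is finite, then R is semilocal; more precisely, the number of maximal ideals of R is at most ω(G_M(R)) + 1. -/
/-! Faithfulness turns `IM ∩ JM = 0` into `IJ = 0`, and a maximal ideal containing the product
of two maximal ideals is one of them. Hence, once any one maximal ideal `m` is removed, the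
remaining maximal ideals are nonzero and pairwise adjacent: they form a clique. -/

namespace SimpleGraph

variable {α : Type*} {G : SimpleGraph α}

theorem IsClique.encard_le_cliqueNum (hbdd : BddAbove {n | ∃ s, G.IsNClique n s}) {s : Set α}
    (hs : G.IsClique s) : s.encard ≤ G.cliqueNum := by
  by_contra! hlt
  obtain ⟨t, hts, htcard⟩ := Set.exists_subset_encard_eq (Order.add_one_le_of_lt hlt)
  have htfin : t.Finite := Set.finite_of_encard_eq_coe (k := G.cliqueNum + 1) (mod_cast htcard)
  have hclique : G.IsNClique (G.cliqueNum + 1) htfin.toFinset :=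
    ⟨by simpa using hs.subset hts, by
      rw [← Nat.cast_inj (R := ℕ∞), ← htfin.encard_eq_coe_toFinset_card, htcard]; rfl⟩
  exact (le_csSup hbdd ⟨_, hclique⟩).not_gt (Nat.lt_succ_self _)

end SimpleGraph

namespace Ideal

variable {R : Type*} [CommRing R]

theorem mul_eq_bot_of_smul_top_inf_smul_top_eq_bot {M : Type*} [AddCommGroup M] [Module R M]
    (hfaith : (⊤ : Submodule R M).annihilator = ⊥) {I J : Ideal R}
    (h : (I • ⊤ ⊓ J • ⊤ : Submodule R M) = ⊥) : I * J = ⊥ := by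
  rw [eq_bot_iff, ← hfaith, Submodule.le_annihilator_iff, Submodule.mul_smul, eq_bot_iff, ← h]
  exact le_inf (Submodule.smul_mono le_rfl le_top) Submodule.smul_le_right

theorem IsMaximal.eq_or_eq_of_mul_le {I J K : Ideal R} (hI : I.IsMaximal) (hJ : J.IsMaximal)
    (hK : K.IsMaximal) (h : I * J ≤ K) : K = I ∨ K = J := by
  rcases hK.isPrime.mul_le.mp h with hIK | hJK
  · exact .inl (hI.eq_of_le hK.ne_top hIK).symm
  · exact .inr (hJ.eq_of_le hK.ne_top hJK).symm

theorem IsMaximal.ne_bot_of_ne {I J : Ideal R} (hI : I.IsMaximal) (hJ : J.IsMaximal)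
    (hne : I ≠ J) : I ≠ ⊥ := by
  rintro rfl
  exact hne (hI.eq_of_le hJ.ne_top bot_le)

end Ideal

theorem isClique_interGraph_isMaximal_ne {R M : Type*} [CommRing R] [AddCommGroup M] [Module R M]
    (hfaith : (⊤ : Submodule R M).annihilator = ⊥) (m : Ideal R) (hm : m.IsMaximal) :
    (interGraph R M).IsClique {v | v.1.IsMaximal ∧ v.1 ≠ m} := by
  intro v ⟨hv, hvm⟩ w ⟨hw, hwm⟩ hvw
  refine ⟨hvw, fun h => ?_⟩
  have hle : v.1 * w.1 ≤ m :=
    (Ideal.mul_eq_bot_of_smul_top_inf_smul_top_eq_bot hfaith h).trans_le bot_le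
  rcases hv.eq_or_eq_of_mul_le hw hm hle with rfl | rfl
  exacts [hvm rfl, hwm rfl]

theorem card_maximals_le_cliqueNum_add_one_general (R M : Type*) [CommRing R] [AddCommGroup M]
    [Module R M]
    (hfaith : (⊤ : Submodule R M).annihilator = ⊥)
    (hfin : BddAbove {n : ℕ | ∃ s, (interGraph R M).IsNClique n s}) :
    {I : Ideal R | I.IsMaximal}.encard ≤ (interGraph R M).cliqueNum + 1 := by
  rcases {I : Ideal R | I.IsMaximal}.eq_empty_or_nonempty with hempty | ⟨m, hm⟩
  · simp [hempty]
  set s := {v : {I : Ideal R // I ≠ ⊥ ∧ I ≠ ⊤} | v.1.IsMaximal ∧ v.1 ≠ m}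
  have hsub : {I : Ideal R | I.IsMaximal} ⊆ insert m (Subtype.val '' s) := by
    intro I hI
    by_cases hIm : I = m
    · exact .inl hIm
    · exact .inr ⟨⟨I, hI.ne_bot_of_ne hm hIm, hI.ne_top⟩, ⟨hI, hIm⟩, rfl⟩
  calc {I : Ideal R | I.IsMaximal}.encard
      ≤ (Subtype.val '' s).encard + 1 :=
        (Set.encard_le_encard hsub).trans (Set.encard_insert_le _ _)
    _ = s.encard + 1 := by rw [Subtype.val_injective.encard_image]
    _ ≤ (interGraph R M).cliqueNum + 1 := by
      gcongr
      exact (isClique_interGraph_isMaximal_ne hfaith m hm).encard_le_cliqueNum hfin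

/-- If `M` is a faithful module over a commutative ring `R` and the clique
number of `G_M(R)` is finite, then `R` is semilocal; more precisely,
`|Max(R)| ≤ ω(G_M(R)) + 1`. -/
theorem card_maximals_le_cliqueNum_add_one (R M : Type*) [CommRing R] [AddCommGroup M]
    [Module R M] [Nontrivial M]
    (hfaith : (⊤ : Submodule R M).annihilator = ⊥)
    (hfin : BddAbove {n : ℕ | ∃ s, (interGraph R M).IsNClique n s}) :
    {I : Ideal R | I.IsMaximal}.encard ≤ (interGraph R M).cliqueNum + 1 :=
  card_maximals_le_cliqueNum_add_one_general R M hfaith hfin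
end

section
/- Let R be a commutative ring and M a faithful R-module. If the clique number ω(G_M(R)) of the M-intersection graph is finite, then the Jacobson radical of R equals the nilradical of R: J(R) = Nil(R). -/
/-! If `a ∈ J(R)` is not nilpotent, then `x ∈ (a x)` forces `x = 0`, so the principal ideals
`(a) ⊋ (a²) ⊋ (a³) ⊋ ⋯` form an infinite strictly descending chain of nontrivial ideals. By
faithfulness `IM ≠ 0` for every nonzero ideal `I`, and for comparable ideals `IM ∩ JM` is the
smaller of the two, so this chain is an infinite clique of `G_M(R)`. -/

theorem SimpleGraph.not_bddAbove_isNClique_of_isClique_range {α : Type*} {G : SimpleGraph α}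
    {f : ℕ → α} (hf : Function.Injective f) (hclique : G.IsClique (Set.range f)) :
    ¬BddAbove {n : ℕ | ∃ s, G.IsNClique n s} := by
  classical
  rintro ⟨B, hB⟩
  have hnclique : G.IsNClique (B + 1) ((Finset.range (B + 1)).image f) :=
    ⟨hclique.subset (by rw [Finset.coe_image]; exact Set.image_subset_range _ _),
      by rw [Finset.card_image_of_injective _ hf, Finset.card_range]⟩
  have : B + 1 ≤ B := hB ⟨_, hnclique⟩
  omega

theorem SimpleGraph.isClique_of_isChain {α : Type*} [PartialOrder α] {G : SimpleGraph α}
    (hadj : ∀ ⦃x y⦄, x < y → G.Adj x y) {s : Set α} (hs : IsChain (· ≤ ·) s) :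
    G.IsClique s := by
  intro x hx y hy hxy
  rcases hs hx hy hxy with h | h
  · exact hadj (h.lt_of_ne hxy)
  · exact (hadj (h.lt_of_ne hxy.symm)).symm

theorem Ideal.eq_zero_of_mem_span_mul_of_mem_jacobson {R : Type*} [CommRing R] {a x : R}
    (ha : a ∈ (⊥ : Ideal R).jacobson) (hx : x ∈ Ideal.span {a * x}) : x = 0 := by
  obtain ⟨r, hr⟩ := Ideal.mem_span_singleton'.mp hx
  have hunit : IsUnit (a * -r + 1) := Ideal.mem_jacobson_bot.mp ha (-r)
  have hzero : x * (a * -r + 1) = 0 := by linear_combination -hr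
  exact hunit.mul_left_eq_zero.mp hzero

theorem Ideal.strictAnti_span_pow_of_mem_jacobson {R : Type*} [CommRing R] {a : R}
    (ha : a ∈ (⊥ : Ideal R).jacobson) (hnil : ¬IsNilpotent a) :
    StrictAnti fun n : ℕ => Ideal.span {a ^ n} := by
  refine strictAnti_nat_of_succ_lt fun n => lt_of_le_of_ne ?_ fun heq => ?_
  · exact Ideal.span_singleton_le_span_singleton.mpr (pow_dvd_pow a n.le_succ)
  · have hmem : a ^ n ∈ Ideal.span {a * a ^ n} := by
      rw [← pow_succ', heq]
      exact Ideal.mem_span_singleton_self _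
    exact hnil ⟨n, Ideal.eq_zero_of_mem_span_mul_of_mem_jacobson ha hmem⟩

theorem Submodule.ideal_smul_top_ne_bot {R M : Type*} [CommRing R] [AddCommGroup M]
    [Module R M] (hfaith : (⊤ : Submodule R M).annihilator = ⊥) {I : Ideal R} (hI : I ≠ ⊥) :
    (I • ⊤ : Submodule R M) ≠ ⊥ := by
  rw [Ne, ← Submodule.le_annihilator_iff, hfaith]
  exact hI ∘ le_bot_iff.mp

theorem interGraph_adj_of_lt {R M : Type*} [CommRing R] [AddCommGroup M] [Module R M]
    (hfaith : (⊤ : Submodule R M).annihilator = ⊥) ⦃I J : {I : Ideal R // I ≠ ⊥ ∧ I ≠ ⊤}⦄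
    (hIJ : I < J) : (interGraph R M).Adj I J := by
  refine ⟨hIJ.ne, ?_⟩
  rw [inf_eq_left.mpr (Submodule.smul_mono_left hIJ.le)]
  exact Submodule.ideal_smul_top_ne_bot hfaith I.2.1

theorem jacobson_eq_nilradical_general (R M : Type*) [CommRing R] [AddCommGroup M]
    [Module R M]
    (hfaith : (⊤ : Submodule R M).annihilator = ⊥)
    (hfin : BddAbove {n : ℕ | ∃ s, (interGraph R M).IsNClique n s}) :
    (⊥ : Ideal R).jacobson = nilradical R := by
  refine le_antisymm (fun a ha => ?_) Ideal.radical_le_jacobson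
  by_contra hnil
  have hanti := Ideal.strictAnti_span_pow_of_mem_jacobson ha hnil
  have hne_bot (n : ℕ) : Ideal.span {a ^ (n + 1)} ≠ ⊥ :=
    fun h => hnil ⟨n + 1, Ideal.span_singleton_eq_bot.mp h⟩
  have hne_top (n : ℕ) : Ideal.span {a ^ (n + 1)} ≠ ⊤ := by
    simpa [Ideal.span_singleton_one] using (hanti n.succ_pos).ne
  let v (n : ℕ) : {I : Ideal R // I ≠ ⊥ ∧ I ≠ ⊤} :=
    ⟨Ideal.span {a ^ (n + 1)}, hne_bot n, hne_top n⟩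
  have hv : StrictAnti v := fun i j hij => hanti (Nat.succ_lt_succ hij)
  exact SimpleGraph.not_bddAbove_isNClique_of_isClique_range hv.injective
    (SimpleGraph.isClique_of_isChain (interGraph_adj_of_lt hfaith) hv.antitone.isChain_range)
    hfin

/-- If `M` is a faithful module over a commutative ring `R` and the clique
number of `G_M(R)` is finite, then the Jacobson radical of `R` equals its nilradical. -/
theorem jacobson_eq_nilradical (R M : Type*) [CommRing R] [AddCommGroup M]
    [Module R M] [Nontrivial M]
    (hfaith : (⊤ : Submodule R M).annihilator = ⊥)
    (hfin : BddAbove {n : ℕ | ∃ s, (interGraph R M).IsNClique n s}) :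
    (⊥ : Ideal R).jacobson = nilradical R :=
  jacobson_eq_nilradical_general R M hfaith hfin
end

section
/- Let n ≥ 2 be an integer and regard ℤ_n as a ℤ-module. Two distinct nontrivial ideals m₁ℤ and m₂ℤ of ℤ (with m₁, m₂ ≥ 2) are adjacent in the ℤ_n-intersection graph G_{ℤ_n}(ℤ) if and only if n does not divide lcm(m₁, m₂). -/
open Function

theorem Submodule.smul_top_inf_smul_top_eq_bot_iff {R M : Type*} [CommRing R] [AddCommGroup M]
    [Module R M] {f : R →ₗ[R] M} (hf : Surjective f) (I J : Ideal R) :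
    I • ⊤ ⊓ J • ⊤ = (⊥ : Submodule R M) ↔
      (I ⊔ LinearMap.ker f) ⊓ (J ⊔ LinearMap.ker f) ≤ LinearMap.ker f := by
  have comap_smul_top (K : Ideal R) : comap f (K • ⊤) = K ⊔ LinearMap.ker f := by
    rw [comap_smul_top_of_surjective K f hf, Ideal.smul_eq_mul, Ideal.mul_top]
  rw [← comap_smul_top, ← comap_smul_top, ← comap_inf, ← comap_bot,
    comap_le_comap_iff_of_surjective hf, le_bot_iff]

theorem Nat.lcm_gcd_gcd (a b n : ℕ) : (a.gcd n).lcm (b.gcd n) = (a.lcm b).gcd n := by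
  rcases eq_or_ne a 0 with rfl | ha
  · simp [Nat.lcm_eq_left_iff_dvd, Nat.gcd_dvd_right]
  rcases eq_or_ne b 0 with rfl | hb
  · simp [Nat.lcm_eq_right_iff_dvd, Nat.gcd_dvd_right]
  rcases eq_or_ne n 0 with rfl | hn
  · simp
  have han := Nat.gcd_ne_zero_right (m := a) hn
  have hbn := Nat.gcd_ne_zero_right (m := b) hn
  have hab := Nat.lcm_ne_zero ha hb
  refine Nat.eq_of_factorization_eq (Nat.lcm_ne_zero han hbn) (Nat.gcd_ne_zero_right hn)
    fun p ↦ ?_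
  simp only [Nat.factorization_lcm han hbn, Nat.factorization_gcd ha hn,
    Nat.factorization_gcd hb hn, Nat.factorization_gcd hab hn, Nat.factorization_lcm ha hb,
    Finsupp.sup_apply, Finsupp.inf_apply]
  exact (inf_sup_right _ _ _).symm

namespace Int

theorem span_natCast_sup_span_natCast (a b : ℕ) :
    Ideal.span {(a : ℤ)} ⊔ Ideal.span {(b : ℤ)} = Ideal.span {((a.gcd b : ℕ) : ℤ)} := by
  rw [← Ideal.span_insert, ← Int.gcd_natCast_natCast, Int.coe_gcd, span_gcd]

theorem span_natCast_inf_span_natCast (a b : ℕ) :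
    Ideal.span {(a : ℤ)} ⊓ Ideal.span {(b : ℤ)} = Ideal.span {((a.lcm b : ℕ) : ℤ)} := by
  rw [span_singleton_inf_span_singleton, ← Int.coe_lcm, Int.lcm_natCast_natCast]

theorem span_natCast_injective : Injective fun a : ℕ ↦ Ideal.span {(a : ℤ)} := fun a b h ↦ by
  rw [Ideal.span_singleton_eq_span_singleton, associated_iff] at h
  omega

end Int

namespace ZMod

theorem toSpanSingleton_one_surjective (n : ℕ) :
    Surjective (LinearMap.toSpanSingleton ℤ (ZMod n) 1) := fun x ↦ by
  obtain ⟨k, rfl⟩ := intCast_surjective x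
  exact ⟨k, by simp⟩

theorem ker_toSpanSingleton_one (n : ℕ) :
    LinearMap.ker (LinearMap.toSpanSingleton ℤ (ZMod n) 1) = Ideal.span {(n : ℤ)} := by
  ext k
  simp [Ideal.mem_span_singleton, intCast_zmod_eq_zero_iff_dvd]

theorem smul_top_inf_smul_top_eq_bot_iff (n a b : ℕ) :
    (Ideal.span {(a : ℤ)} • ⊤ ⊓ Ideal.span {(b : ℤ)} • ⊤ : Submodule ℤ (ZMod n)) = ⊥ ↔
      n ∣ a.lcm b := by
  rw [Submodule.smul_top_inf_smul_top_eq_bot_iff (toSpanSingleton_one_surjective n),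
    ker_toSpanSingleton_one, Int.span_natCast_sup_span_natCast,
    Int.span_natCast_sup_span_natCast, Int.span_natCast_inf_span_natCast,
    Ideal.span_singleton_le_span_singleton, Int.natCast_dvd_natCast, Nat.lcm_gcd_gcd,
    Nat.dvd_gcd_iff, and_iff_left dvd_rfl]

end ZMod

theorem adj_iff_not_dvd_lcm_int_general (n : ℕ)
    (m₁ m₂ : ℕ) (hne : m₁ ≠ m₂)
    (I J : {I : Ideal ℤ // I ≠ ⊥ ∧ I ≠ ⊤})
    (hI : I.1 = Ideal.span {(m₁ : ℤ)}) (hJ : J.1 = Ideal.span {(m₂ : ℤ)}) :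
    (interGraph ℤ (ZMod n)).Adj I J ↔ ¬ (n ∣ Nat.lcm m₁ m₂) := by
  have hIJ : I ≠ J := fun h ↦ hne <| Int.span_natCast_injective <| by
    simp only [← hI, ← hJ, h]
  show I ≠ J ∧ _ ↔ _
  rw [hI, hJ]
  exact (and_iff_right hIJ).trans (ZMod.smul_top_inf_smul_top_eq_bot_iff n m₁ m₂).not

/-- For `n ≥ 2`, regarding `ℤ_n` as a `ℤ`-module, two distinct nontrivial
ideals `m₁ℤ`, `m₂ℤ` (with `m₁, m₂ ≥ 2`) are adjacent in `G_{ℤ_n}(ℤ)` iff `n ∤ lcm(m₁, m₂)`. -/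
theorem adj_iff_not_dvd_lcm_int (n : ℕ) (hn : 2 ≤ n)
    (m₁ m₂ : ℕ) (hm₁ : 2 ≤ m₁) (hm₂ : 2 ≤ m₂) (hne : m₁ ≠ m₂)
    (I J : {I : Ideal ℤ // I ≠ ⊥ ∧ I ≠ ⊤})
    (hI : I.1 = Ideal.span {(m₁ : ℤ)}) (hJ : J.1 = Ideal.span {(m₂ : ℤ)}) :
    (interGraph ℤ (ZMod n)).Adj I J ↔ ¬ (n ∣ Nat.lcm m₁ m₂) :=
  adj_iff_not_dvd_lcm_int_general n m₁ m₂ hne I J hI hJ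
end

section
/- Let m, n ≥ 2 be integers with n dividing m, and regard ℤ_n as a ℤ_m-module. For divisors d₁ ≠ d₂ of m with d₁, d₂ ∉ {1, m}, the vertices d₁ℤ_m and d₂ℤ_m are adjacent in the ℤ_n-intersection graph G_n(ℤ_m) if and only if n does not divide lcm(d₁, d₂). -/
/-!
In `ℤ_n`, the element `d` divides `k` iff `gcd(d, n) ∣ k` (Bézout), and `dℤ_m · ℤ_n = dℤ_n`.
Hence the vertices `d₁ℤ_m`, `d₂ℤ_m` have intersection `{x | gcd(d₁, n) ∣ x, gcd(d₂, n) ∣ x}`,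
and since `lcm(gcd(d₁, n), gcd(d₂, n)) = gcd(lcm(d₁, d₂), n)` this is the ideal generated by
`lcm(d₁, d₂)` in `ℤ_n`, which is zero exactly when `n ∣ lcm(d₁, d₂)`.
-/

theorem Nat.gcd_lcm_eq_lcm_gcd_gcd (a b c : ℕ) :
    Nat.gcd (Nat.lcm a b) c = Nat.lcm (Nat.gcd a c) (Nat.gcd b c) := by
  rcases eq_or_ne a 0 with rfl | ha
  · simp [Nat.lcm_eq_left_iff_dvd.mpr (Nat.gcd_dvd_right b c)]
  rcases eq_or_ne b 0 with rfl | hb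
  · simp [Nat.lcm_eq_right_iff_dvd.mpr (Nat.gcd_dvd_right a c)]
  rcases eq_or_ne c 0 with rfl | hc
  · simp
  refine Nat.eq_of_factorization_eq (Nat.gcd_ne_zero_right hc)
    (Nat.lcm_ne_zero (Nat.gcd_ne_zero_right hc) (Nat.gcd_ne_zero_right hc)) fun p => ?_
  simp only [Nat.factorization_gcd (Nat.lcm_ne_zero ha hb) hc, Nat.factorization_lcm ha hb,
    Nat.factorization_gcd ha hc, Nat.factorization_gcd hb hc,
    Nat.factorization_lcm (Nat.gcd_ne_zero_right hc) (Nat.gcd_ne_zero_right hc),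
    Finsupp.sup_apply, Finsupp.inf_apply]
  omega

namespace ZMod

theorem natCast_dvd_intCast_iff (n d : ℕ) (k : ℤ) :
    (d : ZMod n) ∣ (k : ZMod n) ↔ ((d.gcd n : ℕ) : ℤ) ∣ k := by
  constructor
  · rintro ⟨y, hy⟩
    obtain ⟨y, rfl⟩ := intCast_surjective y
    have hn : (n : ℤ) ∣ k - d * y := by
      rw [← intCast_zmod_eq_zero_iff_dvd]
      push_cast
      rw [hy, sub_self]
    have hgn : ((d.gcd n : ℕ) : ℤ) ∣ n := Int.natCast_dvd_natCast.mpr (Nat.gcd_dvd_right d n)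
    have hgd : ((d.gcd n : ℕ) : ℤ) ∣ d * y :=
      (Int.natCast_dvd_natCast.mpr (Nat.gcd_dvd_left d n)).mul_right y
    simpa using (hgn.trans hn).add hgd
  · rintro ⟨c, rfl⟩
    refine ⟨Nat.gcdA d n * c, ?_⟩
    rw [Nat.gcd_eq_gcd_ab]
    push_cast
    rw [natCast_self]
    ring

theorem natCast_dvd_natCast_iff (n d k : ℕ) : (d : ZMod n) ∣ (k : ZMod n) ↔ d.gcd n ∣ k := by
  simpa [Int.natCast_dvd_natCast] using natCast_dvd_intCast_iff n d k

theorem natCast_dvd_and_natCast_dvd_iff (n a b : ℕ) (x : ZMod n) :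
    (a : ZMod n) ∣ x ∧ (b : ZMod n) ∣ x ↔ (a.lcm b : ZMod n) ∣ x := by
  obtain ⟨k, rfl⟩ := intCast_surjective x
  simp only [natCast_dvd_intCast_iff, Int.natCast_dvd, Nat.gcd_lcm_eq_lcm_gcd_gcd, Nat.lcm_dvd_iff]

theorem span_singleton_natCast_inj {m d e : ℕ} (hd : d ∣ m) (he : e ∣ m) :
    Ideal.span {(d : ZMod m)} = Ideal.span {(e : ZMod m)} ↔ d = e := by
  refine ⟨fun h => Nat.dvd_antisymm ?_ ?_, fun h => h ▸ rfl⟩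
  · simpa [natCast_dvd_natCast_iff, Nat.gcd_eq_left hd] using
      Ideal.span_singleton_le_span_singleton.mp h.ge
  · simpa [natCast_dvd_natCast_iff, Nat.gcd_eq_left he] using
      Ideal.span_singleton_le_span_singleton.mp h.le

end ZMod

theorem mem_span_singleton_smul_top_iff {R S : Type*} [CommSemiring R] [Semiring S] [Module R S]
    (f : R →+* S) (hf : ∀ (a : R) (x : S), a • x = f a * x) (r : R) (x : S) :
    x ∈ (Ideal.span {r} • ⊤ : Submodule R S) ↔ f r ∣ x := by
  simp [Submodule.ideal_span_singleton_smul, Submodule.mem_smul_pointwise_iff_exists, hf,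
    Dvd.dvd, eq_comm]

theorem exists_dvd_and_ne_zero_iff {R : Type*} [MonoidWithZero R] (a : R) :
    (∃ x, a ∣ x ∧ x ≠ 0) ↔ a ≠ 0 :=
  ⟨fun ⟨_, hax, hx⟩ ha => hx (zero_dvd_iff.mp (ha ▸ hax)), fun ha => ⟨a, dvd_rfl, ha⟩⟩

theorem adj_iff_not_dvd_lcm_zmod_general (m n : ℕ) (hnm : n ∣ m)
    [Module (ZMod m) (ZMod n)]
    (hsmul : ∀ (a : ZMod m) (x : ZMod n), a • x = ZMod.castHom hnm (ZMod n) a * x)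
    (d₁ d₂ : ℕ) (hd₁ : d₁ ∣ m) (hd₂ : d₂ ∣ m)
    (hne : d₁ ≠ d₂)
    (I J : {I : Ideal (ZMod m) // I ≠ ⊥ ∧ I ≠ ⊤})
    (hI : I.1 = Ideal.span {(d₁ : ZMod m)}) (hJ : J.1 = Ideal.span {(d₂ : ZMod m)}) :
    (interGraph (ZMod m) (ZMod n)).Adj I J ↔ ¬ (n ∣ Nat.lcm d₁ d₂) := by
  have hIJ : I ≠ J := fun h =>
    hne ((ZMod.span_singleton_natCast_inj hd₁ hd₂).mp (by rw [← hI, ← hJ, h]))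
  have hinf : (I.1 • ⊤ ⊓ J.1 • ⊤ : Submodule (ZMod m) (ZMod n)) ≠ ⊥ ↔
      (Nat.lcm d₁ d₂ : ZMod n) ≠ 0 := by
    simp only [Submodule.ne_bot_iff, Submodule.mem_inf, hI, hJ,
      mem_span_singleton_smul_top_iff _ hsmul, map_natCast, ZMod.natCast_dvd_and_natCast_dvd_iff]
    exact exists_dvd_and_ne_zero_iff _
  simp only [interGraph, ne_eq, hIJ, not_false_eq_true, true_and, hinf, ZMod.natCast_eq_zero_iff]

/-- For `m, n ≥ 2` with `n ∣ m`, regarding `ℤ_n` as a `ℤ_m`-module via the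
natural cast, two distinct vertices `d₁ℤ_m`, `d₂ℤ_m` (where `d₁, d₂` are divisors of `m`
different from `1` and `m`) are adjacent in `G_n(ℤ_m)` iff `n ∤ lcm(d₁, d₂)`. -/
theorem adj_iff_not_dvd_lcm_zmod (m n : ℕ) (hm : 2 ≤ m) (hn : 2 ≤ n) (hnm : n ∣ m)
    [Module (ZMod m) (ZMod n)]
    (hsmul : ∀ (a : ZMod m) (x : ZMod n), a • x = ZMod.castHom hnm (ZMod n) a * x)
    (d₁ d₂ : ℕ) (hd₁ : d₁ ∣ m) (hd₂ : d₂ ∣ m)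
    (h₁ : d₁ ≠ 1) (h₁' : d₁ ≠ m) (h₂ : d₂ ≠ 1) (h₂' : d₂ ≠ m) (hne : d₁ ≠ d₂)
    (I J : {I : Ideal (ZMod m) // I ≠ ⊥ ∧ I ≠ ⊤})
    (hI : I.1 = Ideal.span {(d₁ : ZMod m)}) (hJ : J.1 = Ideal.span {(d₂ : ZMod m)}) :
    (interGraph (ZMod m) (ZMod n)).Adj I J ↔ ¬ (n ∣ Nat.lcm d₁ d₂) :=
  adj_iff_not_dvd_lcm_zmod_general m n hnm hsmul d₁ d₂ hd₁ hd₂ hne I J hI hJ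
end

section
/- Let m, n ≥ 2 be integers with n dividing m, and regard ℤ_n as a ℤ_m-module. For every prime p dividing n, the clique number of G_n(ℤ_m) satisfies ω(G_n(ℤ_m)) ≥ β_p · ∏_{q} (α_q + 1) − 1, where β_p is the multiplicity of p in n, and the product runs over all prime divisors q ≠ p of m with α_q the multiplicity of q in m. -/
open Finset

theorem Nat.card_divisors_prime_pow_mul_ordCompl {p : ℕ} (hp : p.Prime) {m : ℕ} (hm : m ≠ 0)
    (k : ℕ) : (p ^ k * (m / p ^ m.factorization p)).divisors.card =
      (k + 1) * ∏ q ∈ m.primeFactors.erase p, (m.factorization q + 1) := by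
  have hcop : (p ^ k).Coprime (m / p ^ m.factorization p) :=
    (Nat.coprime_ordCompl hp hm).pow_left k
  rw [hcop.card_divisors_mul, Nat.divisors_prime_pow hp, card_map, card_range,
    Nat.card_divisors (Nat.ordCompl_pos p hm).ne', ← Nat.support_factorization,
    Nat.factorization_ordCompl, Finsupp.support_erase, Nat.support_factorization]
  congr 1
  exact prod_congr rfl fun q hq => by rw [Finsupp.erase_ne (mem_erase.mp hq).1]

theorem Nat.factorization_prime_pow_mul_ordCompl {p : ℕ} (hp : p.Prime) {m : ℕ} (hm : m ≠ 0)
    (k : ℕ) : (p ^ k * (m / p ^ m.factorization p)).factorization p = k := by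
  rw [Nat.factorization_mul (pow_ne_zero k hp.ne_zero) (Nat.ordCompl_pos p hm).ne',
    Nat.factorization_ordCompl]
  simp [hp.factorization_pow]

theorem Nat.gcd_dvd_div_of_factorization_lt {d n p : ℕ} (hp : p.Prime) (hn : n ≠ 0) (hd : d ≠ 0)
    (hdn : d.factorization p < n.factorization p) : d.gcd n ∣ n / p := by
  have hg0 : d.gcd n ≠ 0 := Nat.gcd_ne_zero_right hn
  have hgd := (Nat.factorization_le_iff_dvd hg0 hd).mpr (Nat.gcd_dvd_left d n) p
  obtain ⟨c, hc⟩ := Nat.gcd_dvd_right d n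
  generalize d.gcd n = g at *
  have hc0 : c ≠ 0 := by rintro rfl; exact hn (by rw [hc, mul_zero])
  have hpc : p ∣ c := by
    by_contra hpc
    have hn' : n.factorization p = g.factorization p := by
      rw [hc, Nat.factorization_mul hg0 hc0]
      simp [Nat.factorization_eq_zero_of_not_dvd hpc]
    omega
  obtain ⟨c', rfl⟩ := hpc
  rw [hc, mul_left_comm, Nat.mul_div_cancel_left _ hp.pos]
  exact dvd_mul_right _ _

theorem ZMod.natCast_dvd_natCast_gcd (d n : ℕ) : (d : ZMod n) ∣ (d.gcd n : ZMod n) :=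
  ⟨d.gcdA n, by simpa using congrArg (Int.cast : ℤ → ZMod n) (Nat.gcd_eq_gcd_ab d n)⟩

theorem ZMod.dvd_of_natCast_dvd_natCast {d e m : ℕ} (hem : e ∣ m)
    (h : (e : ZMod m) ∣ (d : ZMod m)) : e ∣ d := by
  simpa [ZMod.natCast_self, ZMod.natCast_eq_zero_iff] using map_dvd (ZMod.castHom hem (ZMod e)) h

theorem ZMod.span_natCast_injOn (m : ℕ) :
    Set.InjOn (fun d : ℕ => Ideal.span {(d : ZMod m)}) m.divisors := by
  intro d hd e he h
  simp only at h
  have hde : (e : ZMod m) ∣ d := Ideal.mem_span_singleton.mp (h ▸ Ideal.mem_span_singleton_self _)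
  have hed : (d : ZMod m) ∣ e := Ideal.mem_span_singleton.mp (h ▸ Ideal.mem_span_singleton_self _)
  exact Nat.dvd_antisymm (ZMod.dvd_of_natCast_dvd_natCast (Nat.dvd_of_mem_divisors hd) hed)
    (ZMod.dvd_of_natCast_dvd_natCast (Nat.dvd_of_mem_divisors he) hde)

theorem ZMod.span_natCast_ne_top {d m : ℕ} (hdm : d ∣ m) (hd : d ≠ 1) :
    Ideal.span {(d : ZMod m)} ≠ ⊤ := by
  rw [Ne, Ideal.span_singleton_eq_top]
  intro hu
  exact hd (Nat.dvd_one.mp (ZMod.dvd_of_natCast_dvd_natCast hdm (by simpa using hu.dvd)))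

theorem ZMod.natCast_mem_span_smul_top {R : Type*} [CommRing R] {n : ℕ} [Module R (ZMod n)]
    {d k : ℕ} (h : d.gcd n ∣ k) :
    (k : ZMod n) ∈ Ideal.span {(d : R)} • (⊤ : Submodule R (ZMod n)) := by
  -- whatever the `R`-module structure, `(d : R)` acts on `ZMod n` as `d • ·`
  obtain ⟨y, hy⟩ := (ZMod.natCast_dvd_natCast_gcd d n).trans (Nat.cast_dvd_cast h)
  rw [hy, ← nsmul_eq_mul, ← Nat.cast_smul_eq_nsmul R]
  exact Submodule.smul_mem_smul (Ideal.mem_span_singleton_self _) trivial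

theorem ZMod.natCast_div_ne_zero {n p : ℕ} (hp : 1 < p) (hpn : p ∣ n) (hn : n ≠ 0) :
    ((n / p : ℕ) : ZMod n) ≠ 0 := by
  rw [Ne, ZMod.natCast_eq_zero_iff]
  intro h
  have := Nat.le_of_dvd (Nat.div_pos (Nat.le_of_dvd (Nat.pos_of_ne_zero hn) hpn) (by omega)) h
  have := Nat.div_lt_self (Nat.pos_of_ne_zero hn) hp
  omega

theorem card_le_cliqueNum_interGraph {R M ι : Type*} [CommRing R] [AddCommGroup M] [Module R M]
    [Finite {I : Ideal R // I ≠ ⊥ ∧ I ≠ ⊤}] {s : Finset ι} {I : ι → Ideal R}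
    (hI : Set.InjOn I s) (htop : ∀ i ∈ s, I i ≠ ⊤) {x : M} (hx : x ≠ 0)
    (hmem : ∀ i ∈ s, x ∈ I i • (⊤ : Submodule R M)) :
    #s ≤ (interGraph R M).cliqueNum := by
  classical
  have hbot : ∀ i ∈ s, I i ≠ ⊥ := fun i hi hi' => hx <| by
    simpa [hi', Submodule.bot_smul] using hmem i hi
  let v : s → {I : Ideal R // I ≠ ⊥ ∧ I ≠ ⊤} := fun i => ⟨I i, hbot i i.2, htop i i.2⟩
  have hv : Function.Injective v := fun i j h =>
    Subtype.ext (hI i.2 j.2 (congrArg Subtype.val h))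
  have hclique : (interGraph R M).IsClique (s.attach.image v : Set _) := by
    simp only [coe_image, coe_attach, Set.image_univ]
    rintro _ ⟨i, rfl⟩ _ ⟨j, rfl⟩ hij
    exact ⟨hij, (Submodule.ne_bot_iff _).mpr
      ⟨x, Submodule.mem_inf.mpr ⟨hmem i i.2, hmem j j.2⟩, hx⟩⟩
  simpa [card_image_of_injective _ hv] using hclique.card_le_cliqueNum

theorem cliqueNum_lower_bound_general (m n : ℕ) (hm : 2 ≤ m) (hnm : n ∣ m)
    [Module (ZMod m) (ZMod n)]
    (p : ℕ) (hp : p.Prime) (hpn : p ∣ n) :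
    n.factorization p * (∏ q ∈ m.primeFactors.erase p, (m.factorization q + 1)) - 1 ≤
      (interGraph (ZMod m) (ZMod n)).cliqueNum := by
  have hm0 : m ≠ 0 := by omega
  have hn0 : n ≠ 0 := ne_zero_of_dvd_ne_zero hm0 hnm
  have : NeZero m := ⟨hm0⟩
  set β := n.factorization p
  have hβ : 0 < β := hp.factorization_pos_of_dvd hn0 hpn
  have hβm : β ≤ m.factorization p := (Nat.factorization_le_iff_dvd hn0 hm0).mpr hnm p
  set M := p ^ (β - 1) * (m / p ^ m.factorization p)
  have hM0 : M ≠ 0 := mul_ne_zero (pow_ne_zero _ hp.ne_zero) (Nat.ordCompl_pos p hm0).ne'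
  have hMm : M ∣ m := (Nat.mul_dvd_mul_right (Nat.pow_dvd_pow p (by omega)) _).trans
    (Nat.ordProj_mul_ordCompl_eq_self m p).dvd
  have hD : ∀ d ∈ M.divisors.erase 1, d ∣ m ∧ d.factorization p < β := fun d hd => by
    have hdM := Nat.dvd_of_mem_divisors (mem_of_mem_erase hd)
    have := (Nat.factorization_le_iff_dvd (ne_zero_of_dvd_ne_zero hM0 hdM) hM0).mpr hdM p
    rw [Nat.factorization_prime_pow_mul_ordCompl hp hm0] at this
    exact ⟨hdM.trans hMm, by omega⟩
  calc β * ∏ q ∈ m.primeFactors.erase p, (m.factorization q + 1) - 1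
      = #(M.divisors.erase 1) := by
        rw [card_erase_of_mem (Nat.one_mem_divisors.mpr hM0),
          Nat.card_divisors_prime_pow_mul_ordCompl hp hm0, Nat.sub_add_cancel hβ]
    _ ≤ _ := card_le_cliqueNum_interGraph (I := fun d : ℕ => Ideal.span {(d : ZMod m)})
        ((ZMod.span_natCast_injOn m).mono fun d hd => Nat.mem_divisors.mpr ⟨(hD d hd).1, hm0⟩)
        (fun d hd => ZMod.span_natCast_ne_top (hD d hd).1 (ne_of_mem_erase hd))
        (ZMod.natCast_div_ne_zero hp.one_lt hpn hn0)
        (fun d hd => ZMod.natCast_mem_span_smul_top (Nat.gcd_dvd_div_of_factorization_lt hp hn0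
          (ne_zero_of_dvd_ne_zero hm0 (hD d hd).1) (hD d hd).2))

/-- For `m, n ≥ 2` with `n ∣ m`, regarding `ℤ_n` as a `ℤ_m`-module via the
natural cast, for every prime `p` dividing `n` the clique number of `G_n(ℤ_m)` is at least
`β_p · ∏_{q ≠ p, q ∣ m} (α_q + 1) − 1`, where `β_p` is the multiplicity of `p` in `n` and
`α_q` that of `q` in `m`. -/
theorem cliqueNum_lower_bound (m n : ℕ) (hm : 2 ≤ m) (hn : 2 ≤ n) (hnm : n ∣ m)
    [Module (ZMod m) (ZMod n)]
    (hsmul : ∀ (a : ZMod m) (x : ZMod n), a • x = ZMod.castHom hnm (ZMod n) a * x)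
    (p : ℕ) (hp : p.Prime) (hpn : p ∣ n) :
    n.factorization p * (∏ q ∈ m.primeFactors.erase p, (m.factorization q + 1)) - 1 ≤
      (interGraph (ZMod m) (ZMod n)).cliqueNum :=
  cliqueNum_lower_bound_general m n hm hnm p hp hpn
end

section
/- Let m, n ≥ 2 be integers with n dividing m, and regard ℤ_n as a ℤ_m-module. Write α_p and β_p for the multiplicities of a prime p in m and n respectively. If α_p ≤ 2β_p − 1 for every prime p dividing n, then G_n(ℤ_m) is weakly perfect, i.e., its chromatic number equals its clique number. -/
/-!
Write a nontrivial ideal of `ℤ_m` as `dℤ_m` with `d ∣ m`. Then `(dℤ_m)ℤ_n = gcd(d, n)ℤ_n`, and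
two such submodules meet nontrivially iff some prime `p ∣ n` has `v_p(d) < β_p` and
`v_p(e) < β_p`. So `G_n(ℤ_m)` is the intersection graph of the sets `D(d)` of these deficient
primes of `n`.

Let `P` be the set of primes dividing `n`. The hypothesis `α_p ≤ 2β_p − 1` makes the fibres of
`D` monotone: dividing by `∏_{p ∈ C \ B} p^{β_p}` injects the divisors with `D = B` into those
with `D = C` whenever `∅ ≠ B ⊆ C ⊊ P`. In such an intersection graph, the vertices with `D = P`,
together with the larger fibre of every complementary pair `{A, P \ A}` (ties broken by a fixed
prime `a`), form a clique: for disjoint chosen `A`, `B`, monotonicity gives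
`|A| ≤ |P \ B| ≤ |B| ≤ |P \ A| ≤ |A|` on fibre sizes, so both are ties and both contain `a`.
Mapping each smaller fibre injectively into its complementary fibre colours the graph with this
clique.
-/

namespace SimpleGraph

variable {V α : Type*}

def intersectionGraph (D : V → Finset α) : SimpleGraph V where
  Adj v w := v ≠ w ∧ ¬Disjoint (D v) (D w)
  symm := ⟨fun _ _ h => ⟨h.1.symm, fun hd => h.2 hd.symm⟩⟩
  loopless := ⟨fun _ h => h.1 rfl⟩

variable {G : SimpleGraph V}

theorem chromaticNumber_eq_cliqueNum_of_coloring [Finite V] {s : Set V} (hs : G.IsClique s)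
    (C : G.Coloring s) : G.chromaticNumber = G.cliqueNum := by
  classical
  have := Fintype.ofFinite V
  refine le_antisymm ?_ G.cliqueNum_le_chromaticNumber
  calc G.chromaticNumber ≤ Fintype.card s := C.colorable.chromaticNumber_le
    _ = s.toFinset.card := by rw [Set.toFinset_card]
    _ ≤ G.cliqueNum := by
      exact_mod_cast IsClique.card_le_cliqueNum (tc := by simpa using hs)

theorem chromaticNumber_bot_eq_cliqueNum [Finite V] :
    (⊥ : SimpleGraph V).chromaticNumber = (⊥ : SimpleGraph V).cliqueNum := by
  rcases isEmpty_or_nonempty V with hV | ⟨⟨v⟩⟩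
  · exact chromaticNumber_eq_cliqueNum_of_coloring (s := ∅) isClique_empty
      (Coloring.mk isEmptyElim fun {v} => isEmptyElim v)
  · exact chromaticNumber_eq_cliqueNum_of_coloring (s := {v}) (isClique_singleton v)
      (Coloring.mk (fun _ => ⟨v, rfl⟩) fun h => h.elim)

section MonotoneFibers

variable [DecidableEq α] {P A B : Finset α} {D : V → Finset α} {a : α}

def HasMonotoneFibers (P : Finset α) (D : V → Finset α) : Prop :=
  ∀ B C, B.Nonempty → B ⊆ C → C ⊂ P → (D ⁻¹' {B}).ncard ≤ (D ⁻¹' {C}).ncard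

def IsHeavy (P : Finset α) (D : V → Finset α) (a : α) (A : Finset α) : Prop :=
  (D ⁻¹' {P \ A}).ncard < (D ⁻¹' {A}).ncard ∨
    (D ⁻¹' {P \ A}).ncard = (D ⁻¹' {A}).ncard ∧ a ∈ A

theorem isHeavy_sdiff (ha : a ∈ P) (hA : A ⊆ P) (h : ¬IsHeavy P D a A) :
    IsHeavy P D a (P \ A) := by
  unfold IsHeavy at *
  rw [Finset.sdiff_sdiff_eq_self hA]
  push Not at h
  rcases h.1.lt_or_eq with hlt | heq
  · exact Or.inl hlt
  · exact Or.inr ⟨heq, Finset.mem_sdiff.2 ⟨ha, h.2 heq.symm⟩⟩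

theorem IsHeavy.not_disjoint
    (hmono : HasMonotoneFibers P D) (hA : IsHeavy P D a A) (hB : IsHeavy P D a B)
    (hAne : A.Nonempty) (hBne : B.Nonempty) (hAP : A ⊆ P) (hBP : B ⊆ P) : ¬Disjoint A B := by
  intro hAB
  have hBA := hmono B (P \ A) hBne (Finset.subset_sdiff.2 ⟨hBP, hAB.symm⟩)
    (Finset.sdiff_ssubset hAP hAne)
  have hAB' := hmono A (P \ B) hAne (Finset.subset_sdiff.2 ⟨hAP, hAB⟩)
    (Finset.sdiff_ssubset hBP hBne)
  have haAB : a ∈ A ∧ a ∈ B := by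
    rcases hA with hA | hA <;> rcases hB with hB | hB
    all_goals first | omega | exact ⟨hA.2, hB.2⟩
  exact Finset.disjoint_left.1 hAB haAB.1 haAB.2

def heavySet (P : Finset α) (D : V → Finset α) (a : α) : Set V :=
  {v | (D v).Nonempty ∧ (D v = P ∨ IsHeavy P D a (D v))}

theorem isClique_heavySet (hD : ∀ v, D v ⊆ P) (hmono : HasMonotoneFibers P D) :
    (intersectionGraph D).IsClique (heavySet P D a) := by
  rintro v ⟨hv, hvP | hvH⟩ w ⟨hw, hwP | hwH⟩ hvw <;> refine ⟨hvw, ?_⟩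
  · rw [hvP]; exact fun h => hw.ne_empty (disjoint_self.1 (h.mono_left (hD w)))
  · rw [hvP]; exact fun h => hw.ne_empty (disjoint_self.1 (h.mono_left (hD w)))
  · rw [hwP]; exact fun h => hv.ne_empty (disjoint_self.1 (h.mono_right (hD v)))
  · exact hvH.not_disjoint hmono hwH hv hw (hD v) (hD w)

theorem mem_heavySet_of_eq_sdiff (ha : a ∈ P) (hD : ∀ v, D v ⊆ P) {v u : V}
    (hv : (D v).Nonempty) (hvK : v ∉ heavySet P D a) (hu : D u = P \ D v) :
    u ∈ heavySet P D a := by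
  simp only [heavySet, Set.mem_ofPred_eq, not_and, not_or] at hvK ⊢
  obtain ⟨hvP, hvH⟩ := hvK hv
  rw [hu]
  exact ⟨Finset.sdiff_nonempty.2 fun h => hvP ((hD v).antisymm h),
    Or.inr (isHeavy_sdiff ha (hD v) hvH)⟩

variable [Finite V]

theorem heavySet_nonempty (ha : a ∈ P) (hD : ∀ v, D v ⊆ P) {v₀ : V}
    (hv₀ : (D v₀).Nonempty) : (heavySet P D a).Nonempty := by
  by_cases hK : v₀ ∈ heavySet P D a
  · exact ⟨v₀, hK⟩
  have hH : ¬IsHeavy P D a (D v₀) := fun h => hK ⟨hv₀, Or.inr h⟩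
  have hpos : 0 < (D ⁻¹' {P \ D v₀}).ncard := by
    have : 0 < (D ⁻¹' {D v₀}).ncard := (Set.ncard_pos).2 ⟨v₀, rfl⟩
    unfold IsHeavy at hH
    omega
  obtain ⟨u, hu⟩ := (Set.ncard_pos).1 hpos
  exact ⟨u, mem_heavySet_of_eq_sdiff ha hD hv₀ hK hu⟩

theorem exists_mapsTo_injOn_fiber_sdiff [Nonempty V] (P : Finset α) (D : V → Finset α) (a : α) :
    ∃ f : Finset α → V → V, ∀ A, ¬IsHeavy P D a A →
      Set.MapsTo (f A) (D ⁻¹' {A}) (D ⁻¹' {P \ A}) ∧ Set.InjOn (f A) (D ⁻¹' {A}) := by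
  suffices ∀ A, ∃ f : V → V, ¬IsHeavy P D a A →
      Set.MapsTo f (D ⁻¹' {A}) (D ⁻¹' {P \ A}) ∧ Set.InjOn f (D ⁻¹' {A}) by
    choose f hf using this
    exact ⟨f, hf⟩
  intro A
  by_cases hA : IsHeavy P D a A
  · exact ⟨id, fun h => absurd hA h⟩
  have hle : (D ⁻¹' {A}).ncard ≤ (D ⁻¹' {P \ A}).ncard := by unfold IsHeavy at hA; omega
  obtain ⟨f, hf⟩ := (Set.toFinite (D ⁻¹' {A})).exists_injOn_of_encard_le
    (t := D ⁻¹' {P \ A}) (by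
      rw [← (Set.toFinite _).cast_ncard_eq, ← (Set.toFinite _).cast_ncard_eq]
      exact_mod_cast hle)
  exact ⟨f, fun _ => hf⟩

theorem nonempty_coloring_heavySet (ha : a ∈ P) (hD : ∀ v, D v ⊆ P)
    (hK : (heavySet P D a).Nonempty) :
    Nonempty ((intersectionGraph D).Coloring (heavySet P D a)) := by
  classical
  obtain ⟨k₀, hk₀⟩ := hK
  have : Nonempty V := ⟨k₀⟩
  obtain ⟨f, hf⟩ := exists_mapsTo_injOn_fiber_sdiff P D a
  set K := heavySet P D a
  have hnH : ∀ v, (D v).Nonempty → v ∉ K → ¬IsHeavy P D a (D v) := fun v hv hvK h =>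
    hvK ⟨hv, Or.inr h⟩
  -- vertices with `D v = ∅` are isolated, so any colour `k₀` will do for them
  let c : V → V := fun v => if v ∈ K then v else if (D v).Nonempty then f (D v) v else k₀
  have hcK : ∀ v ∈ K, c v = v := fun v hv => if_pos hv
  have hcD : ∀ v, (D v).Nonempty → v ∉ K → D (c v) = P \ D v := fun v hv hvK => by
    simp only [c, if_neg hvK, if_pos hv]
    exact (hf (D v) (hnH v hv hvK)).1 rfl
  have hc : ∀ v, c v ∈ K := fun v => by
    by_cases hvK : v ∈ K
    · rwa [hcK v hvK]
    by_cases hv : (D v).Nonempty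
    · exact mem_heavySet_of_eq_sdiff ha hD hv hvK (hcD v hv hvK)
    · simpa [c, hvK, hv] using hk₀
  have hmixed : ∀ v w, ¬Disjoint (D v) (D w) → v ∈ K → w ∉ K → c v ≠ c w := by
    intro v w hvw hvK hwK heq
    have hw : (D w).Nonempty := Finset.nonempty_iff_ne_empty.2 fun h => hvw (by simp [h])
    rw [hcK v hvK] at heq
    exact hvw (by rw [heq, hcD w hw hwK]; exact Finset.sdiff_disjoint)
  refine ⟨Coloring.mk (fun v => ⟨c v, hc v⟩) ?_⟩
  rintro v w ⟨hne, hvw⟩ heq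
  replace heq : c v = c w := congrArg Subtype.val heq
  obtain ⟨x, hxv, hxw⟩ := Finset.not_disjoint_iff.1 hvw
  by_cases hvK : v ∈ K <;> by_cases hwK : w ∈ K
  · exact hne (by rwa [hcK v hvK, hcK w hwK] at heq)
  · exact hmixed v w hvw hvK hwK heq
  · exact hmixed w v (fun h => hvw h.symm) hwK hvK heq.symm
  have hDvw : D v = D w := by
    have := congrArg D heq
    rw [hcD v ⟨x, hxv⟩ hvK, hcD w ⟨x, hxw⟩ hwK] at this
    rw [← Finset.sdiff_sdiff_eq_self (hD v), this, Finset.sdiff_sdiff_eq_self (hD w)]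
  have hv : (D v).Nonempty := ⟨x, hxv⟩
  refine hne ((hf (D v) (hnH v hv hvK)).2 rfl hDvw.symm ?_)
  simpa [c, hvK, hwK, hv, ← hDvw] using heq

theorem chromaticNumber_intersectionGraph_eq_cliqueNum (hD : ∀ v, D v ⊆ P)
    (hmono : HasMonotoneFibers P D) :
    (intersectionGraph D).chromaticNumber = (intersectionGraph D).cliqueNum := by
  by_cases h : ∃ v, (D v).Nonempty
  · obtain ⟨v₀, a, hav₀⟩ := h
    have ha : a ∈ P := hD v₀ hav₀
    obtain ⟨C⟩ := nonempty_coloring_heavySet ha hD (heavySet_nonempty ha hD ⟨a, hav₀⟩)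
    exact chromaticNumber_eq_cliqueNum_of_coloring (isClique_heavySet hD hmono) C
  · have : intersectionGraph D = ⊥ := by
      ext v w
      simp only [not_exists, Finset.not_nonempty_iff_eq_empty] at h
      simp [intersectionGraph, h]
    rw [this]
    exact chromaticNumber_bot_eq_cliqueNum

end MonotoneFibers
end SimpleGraph

namespace Nat

theorem factorization_div_prod_pow {d : ℕ} {f : ℕ →₀ ℕ} (hf : f ≤ d.factorization) :
    (d / f.prod (· ^ ·)).factorization = d.factorization - f := by
  rw [factorization_div (prod_pow_dvd_of_le_factorization hf),
    factorization_prod_pow_eq_self_of_le_factorization hf]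

theorem factorization_lt_of_gcd_dvd {n d k p : ℕ} (hn : n ≠ 0) (hd : d ≠ 0) (hk : k ≠ 0)
    (h : d.gcd n ∣ k) (hkp : k.factorization p < n.factorization p) :
    d.factorization p < n.factorization p := by
  have := (factorization_le_iff_dvd (gcd_ne_zero_right hn) hk).2 h p
  rw [factorization_gcd hd hn, Finsupp.inf_apply] at this
  omega

theorem gcd_dvd_div_of_factorization_lt_s16 {n d p : ℕ} (hp : p.Prime) (hn : n ≠ 0) (hd : d ≠ 0)
    (h : d.factorization p < n.factorization p) : d.gcd n ∣ n / p := by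
  have hpn : p ∣ n := dvd_of_factorization_pos (by omega)
  have hnp : n / p ≠ 0 := (div_pos (le_of_dvd (by omega) hpn) hp.pos).ne'
  rw [← factorization_le_iff_dvd (gcd_ne_zero_right hn) hnp, factorization_gcd hd hn,
    factorization_div hpn, hp.factorization]
  intro q
  simp only [Finsupp.inf_apply, Finsupp.coe_tsub, Pi.sub_apply, Finsupp.single_apply]
  split_ifs with hq
  · subst hq; omega
  · exact inf_le_right.trans (Nat.sub_zero _).ge

end Nat

def deficientPrimes (n d : ℕ) : Finset ℕ :=
  {p ∈ n.primeFactors | d.factorization p < n.factorization p}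

section deficientPrimes

variable {m n d : ℕ}

theorem deficientPrimes_one : deficientPrimes n 1 = n.primeFactors := by
  ext p
  simp only [deficientPrimes, Finset.mem_filter, Nat.factorization_one, Finsupp.coe_zero,
    Pi.zero_apply, and_iff_left_iff_imp]
  intro hp
  exact Nat.pos_of_ne_zero (Finsupp.mem_support_iff.1 (by rwa [Nat.support_factorization]))

theorem deficientPrimes_eq_empty_of_dvd (hd : d ≠ 0) (h : n ∣ d) :
    deficientPrimes n d = ∅ := by
  ext p
  simp only [deficientPrimes, Finset.mem_filter, Finset.notMem_empty, iff_false, not_and, not_lt]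
  exact fun _ => (Nat.factorization_le_iff_dvd (ne_zero_of_dvd_ne_zero hd h) hd).2 h p

theorem filter_factorization_le_of_disjoint {T : Finset ℕ} (hT : T ⊆ n.primeFactors)
    (hdisj : Disjoint T (deficientPrimes n d)) :
    n.factorization.filter (· ∈ T) ≤ d.factorization := by
  intro p
  rw [Finsupp.filter_apply]
  split_ifs with hp
  · have := Finset.disjoint_left.1 hdisj hp
    simp only [deficientPrimes, Finset.mem_filter, not_and, not_lt] at this
    exact this (hT hp)
  · exact Nat.zero_le _

theorem deficientPrimes_div_prod_pow
    (hle : ∀ p : ℕ, p.Prime → p ∣ n → m.factorization p ≤ 2 * n.factorization p - 1)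
    (hm : m ≠ 0) (hd : d ∣ m) {T : Finset ℕ} (hT : T ⊆ n.primeFactors)
    (hdisj : Disjoint T (deficientPrimes n d)) :
    deficientPrimes n (d / (n.factorization.filter (· ∈ T)).prod (· ^ ·)) =
      deficientPrimes n d ∪ T := by
  ext p
  simp only [deficientPrimes, Finset.mem_union, Finset.mem_filter,
    Nat.factorization_div_prod_pow (filter_factorization_le_of_disjoint hT hdisj),
    Finsupp.coe_tsub, Pi.sub_apply, Finsupp.filter_apply]
  by_cases hpT : p ∈ T
  · have hp := Nat.mem_primeFactors.1 (hT hpT)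
    have hα := (Nat.factorization_le_iff_dvd (ne_zero_of_dvd_ne_zero hm hd) hm).2 hd p
    have hαβ := hle p hp.1 hp.2.1
    have hβ : 0 < n.factorization p := hp.1.factorization_pos_of_dvd hp.2.2 hp.2.1
    simp only [hpT, if_true, hT hpT, true_and, or_true, iff_true]
    -- `v_p(d) - β_p ≤ α_p - β_p < β_p`: the one place where `α_p ≤ 2β_p - 1` is used
    omega
  · simp [hpT]

theorem ncard_deficientPrimes_le
    (hle : ∀ p : ℕ, p.Prime → p ∣ n → m.factorization p ≤ 2 * n.factorization p - 1)
    (hm : m ≠ 0) {B C : Finset ℕ} (hBC : B ⊆ C) (hC : C ⊆ n.primeFactors) :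
    {d | d ∣ m ∧ deficientPrimes n d = B}.ncard ≤
      {d | d ∣ m ∧ deficientPrimes n d = C}.ncard := by
  set k := (n.factorization.filter (· ∈ C \ B)).prod (· ^ ·)
  have hk : ∀ d ∈ {d | d ∣ m ∧ deficientPrimes n d = B},
      k ∣ d ∧ d / k ∣ m ∧ deficientPrimes n (d / k) = C := by
    rintro d ⟨hd, rfl⟩
    have hT : C \ deficientPrimes n d ⊆ n.primeFactors := Finset.sdiff_subset.trans hC
    have hkd : k ∣ d := Nat.prod_pow_dvd_of_le_factorization
      (filter_factorization_le_of_disjoint hT Finset.sdiff_disjoint)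
    refine ⟨hkd, (Nat.div_dvd_of_dvd hkd).trans hd, ?_⟩
    rw [deficientPrimes_div_prod_pow hle hm hd hT Finset.sdiff_disjoint,
      Finset.union_sdiff_of_subset hBC]
  refine Set.ncard_le_ncard_of_injOn (· / k) (fun d hd => (hk d hd).2) ?_ ?_
  · intro d hd e he hde
    exact (Nat.div_left_inj (hk d hd).1 (hk e he).1).1 hde
  · exact m.divisors.finite_toSet.subset fun d hd => Nat.mem_divisors.2 ⟨hd.1, hm⟩

end deficientPrimes

namespace ZMod

theorem natCast_dvd_natCast_iff_gcd_dvd {n d k : ℕ} :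
    (d : ZMod n) ∣ (k : ZMod n) ↔ d.gcd n ∣ k := by
  constructor
  · rintro ⟨c, hc⟩
    obtain ⟨c, rfl⟩ := ZMod.intCast_surjective c
    have hnk : (n : ℤ) ∣ d * c - k := (ZMod.intCast_eq_intCast_iff_dvd_sub _ _ _).1 (by
      push_cast; exact hc)
    have hg : (d.gcd n : ℤ) ∣ d * c - (d * c - k) :=
      dvd_sub ((Int.natCast_dvd_natCast.2 (Nat.gcd_dvd_left d n)).mul_right c)
        ((Int.natCast_dvd_natCast.2 (Nat.gcd_dvd_right d n)).trans hnk)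
    exact Int.natCast_dvd_natCast.1 (by simpa using hg)
  · rintro ⟨t, rfl⟩
    refine ⟨Nat.gcdA d n * t, ?_⟩
    have := congrArg (Int.cast : ℤ → ZMod n) (Nat.gcd_eq_gcd_ab d n)
    push_cast at this ⊢
    rw [this, ZMod.natCast_self]
    ring

theorem exists_ne_zero_natCast_dvd_iff {n d e : ℕ} [NeZero n] (hd : d ≠ 0) (he : e ≠ 0) :
    (∃ x : ZMod n, ((d : ZMod n) ∣ x ∧ (e : ZMod n) ∣ x) ∧ x ≠ 0) ↔
      ¬Disjoint (deficientPrimes n d) (deficientPrimes n e) := by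
  have hn : n ≠ 0 := NeZero.ne n
  constructor
  · rintro ⟨x, ⟨hdx, hex⟩, hx⟩
    rw [← ZMod.natCast_zmod_val x, natCast_dvd_natCast_iff_gcd_dvd] at hdx hex
    have hk : x.val ≠ 0 := (ZMod.val_ne_zero x).2 hx
    have hnk : ¬n ∣ x.val := fun h => (Nat.le_of_dvd (Nat.pos_of_ne_zero hk) h).not_gt x.val_lt
    rw [← Nat.factorization_le_iff_dvd hn hk, Finsupp.le_def] at hnk
    push Not at hnk
    obtain ⟨p, hp⟩ := hnk
    have hpn : p ∈ n.primeFactors := by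
      rw [← Nat.support_factorization, Finsupp.mem_support_iff]; omega
    refine Finset.not_disjoint_iff.2 ⟨p, ?_, ?_⟩ <;> rw [deficientPrimes, Finset.mem_filter]
    · exact ⟨hpn, Nat.factorization_lt_of_gcd_dvd hn hd hk hdx hp⟩
    · exact ⟨hpn, Nat.factorization_lt_of_gcd_dvd hn he hk hex hp⟩
  · intro h
    obtain ⟨p, hpd, hpe⟩ := Finset.not_disjoint_iff.1 h
    simp only [deficientPrimes, Finset.mem_filter] at hpd hpe
    have hp := Nat.prime_of_mem_primeFactors hpd.1
    refine ⟨((n / p : ℕ) : ZMod n), ⟨?_, ?_⟩, ?_⟩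
    · exact natCast_dvd_natCast_iff_gcd_dvd.2 (Nat.gcd_dvd_div_of_factorization_lt_s16 hp hn hd hpd.2)
    · exact natCast_dvd_natCast_iff_gcd_dvd.2 (Nat.gcd_dvd_div_of_factorization_lt_s16 hp hn he hpe.2)
    · rw [Ne, ZMod.natCast_eq_zero_iff]
      have hn0 : 0 < n := Nat.pos_of_ne_zero hn
      have hpos : 0 < n / p :=
        Nat.div_pos (Nat.le_of_dvd hn0 (Nat.dvd_of_mem_primeFactors hpd.1)) hp.pos
      exact fun h => (Nat.le_of_dvd hpos h).not_gt (Nat.div_lt_self hn0 hp.one_lt)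

variable {m : ℕ}

theorem span_natCast_le_span_natCast_iff {d e : ℕ} (he : e ∣ m) :
    Ideal.span {(d : ZMod m)} ≤ Ideal.span {(e : ZMod m)} ↔ e ∣ d := by
  rw [Ideal.span_singleton_le_span_singleton, natCast_dvd_natCast_iff_gcd_dvd, Nat.gcd_eq_left he]

theorem eq_of_span_natCast_eq {d e : ℕ} (hd : d ∣ m) (he : e ∣ m)
    (h : Ideal.span {(d : ZMod m)} = Ideal.span {(e : ZMod m)}) : d = e :=
  Nat.dvd_antisymm ((span_natCast_le_span_natCast_iff hd).1 h.ge)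
    ((span_natCast_le_span_natCast_iff he).1 h.le)

noncomputable def idealDivisor (I : Ideal (ZMod m)) : ℕ :=
  (Submodule.IsPrincipal.generator (I.comap (Int.castRingHom (ZMod m)))).natAbs

theorem span_idealDivisor (I : Ideal (ZMod m)) :
    Ideal.span {(idealDivisor I : ZMod m)} = I := by
  set J := I.comap (Int.castRingHom (ZMod m))
  calc Ideal.span {(idealDivisor I : ZMod m)}
      = (Ideal.span {((idealDivisor I : ℕ) : ℤ)}).map (Int.castRingHom (ZMod m)) := by
        rw [Ideal.map_span, Set.image_singleton, eq_intCast, Int.cast_natCast]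
    _ = J.map (Int.castRingHom (ZMod m)) := by
        rw [idealDivisor, Int.span_natAbs, Ideal.span_singleton_generator]
    _ = I := Ideal.map_comap_of_surjective _ ZMod.intCast_surjective I

theorem idealDivisor_dvd (I : Ideal (ZMod m)) : idealDivisor I ∣ m := by
  have hm : (m : ℤ) ∈ I.comap (Int.castRingHom (ZMod m)) := by
    simp [Ideal.mem_comap]
  rw [Submodule.IsPrincipal.mem_iff_generator_dvd] at hm
  exact Int.natAbs_dvd_natAbs.2 hm

theorem idealDivisor_span_natCast {d : ℕ} (hd : d ∣ m) :
    idealDivisor (Ideal.span {(d : ZMod m)}) = d :=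
  eq_of_span_natCast_eq (idealDivisor_dvd _) hd (span_idealDivisor _)

theorem idealDivisor_injective : Function.Injective (idealDivisor (m := m)) :=
  Function.LeftInverse.injective (g := fun d : ℕ => Ideal.span {(d : ZMod m)}) span_idealDivisor

end ZMod

section ZModModule

variable {m n : ℕ} {hnm : n ∣ m} [Module (ZMod m) (ZMod n)]

theorem mem_span_natCast_smul_top_iff
    (hsmul : ∀ (a : ZMod m) (x : ZMod n), a • x = ZMod.castHom hnm (ZMod n) a * x)
    {d : ℕ} {x : ZMod n} :
    x ∈ Ideal.span {(d : ZMod m)} • (⊤ : Submodule (ZMod m) (ZMod n)) ↔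
      (d : ZMod n) ∣ x := by
  simp only [Submodule.ideal_span_singleton_smul, Submodule.mem_smul_pointwise_iff_exists,
    Submodule.mem_top, true_and, hsmul, map_natCast, Dvd.dvd, eq_comm]

theorem interGraph_zmod_eq_intersectionGraph [NeZero m]
    (hsmul : ∀ (a : ZMod m) (x : ZMod n), a • x = ZMod.castHom hnm (ZMod n) a * x) :
    interGraph (ZMod m) (ZMod n) =
      SimpleGraph.intersectionGraph fun I => deficientPrimes n (ZMod.idealDivisor I.1) := by
  have : NeZero n := ⟨ne_zero_of_dvd_ne_zero (NeZero.ne m) hnm⟩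
  have hd : ∀ I : Ideal (ZMod m), ZMod.idealDivisor I ≠ 0 := fun I =>
    ne_zero_of_dvd_ne_zero (NeZero.ne m) (ZMod.idealDivisor_dvd I)
  ext I J
  simp only [interGraph, SimpleGraph.intersectionGraph]
  refine and_congr_right fun _ => ?_
  conv_lhs => rw [← ZMod.span_idealDivisor I.1, ← ZMod.span_idealDivisor J.1]
  simp only [Submodule.ne_bot_iff, Submodule.mem_inf, mem_span_natCast_smul_top_iff hsmul]
  exact ZMod.exists_ne_zero_natCast_dvd_iff (hd _) (hd _)

end ZModModule

theorem ncard_deficientPrimes_idealDivisor {m n : ℕ} [NeZero m] (hnm : n ∣ m) {B : Finset ℕ}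
    (hB : B.Nonempty) (hBn : B ≠ n.primeFactors) :
    ((fun I : {I : Ideal (ZMod m) // I ≠ ⊥ ∧ I ≠ ⊤} =>
        deficientPrimes n (ZMod.idealDivisor I.1)) ⁻¹' {B}).ncard =
      {d | d ∣ m ∧ deficientPrimes n d = B}.ncard := by
  rw [← Set.ncard_image_of_injective _ (ZMod.idealDivisor_injective.comp Subtype.val_injective)]
  congr 1
  ext d
  constructor
  · rintro ⟨I, hI, rfl⟩
    exact ⟨ZMod.idealDivisor_dvd _, hI⟩
  rintro ⟨hd, rfl⟩
  have hbot : Ideal.span {(d : ZMod m)} ≠ ⊥ := fun h => by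
    rw [← Ideal.span_singleton_eq_bot.2 (ZMod.natCast_self m)] at h
    rw [ZMod.eq_of_span_natCast_eq hd dvd_rfl h,
      deficientPrimes_eq_empty_of_dvd (NeZero.ne m) hnm] at hB
    exact Finset.not_nonempty_empty hB
  have htop : Ideal.span {(d : ZMod m)} ≠ ⊤ := fun h => by
    rw [← Ideal.span_singleton_one, ← Nat.cast_one] at h
    rw [ZMod.eq_of_span_natCast_eq hd (one_dvd m) h, deficientPrimes_one] at hBn
    exact hBn rfl
  exact ⟨⟨_, hbot, htop⟩, by simp [ZMod.idealDivisor_span_natCast hd],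
    ZMod.idealDivisor_span_natCast hd⟩

theorem weakly_perfect_of_le_general (m n : ℕ) (hm : 2 ≤ m) (hnm : n ∣ m)
    [Module (ZMod m) (ZMod n)]
    (hsmul : ∀ (a : ZMod m) (x : ZMod n), a • x = ZMod.castHom hnm (ZMod n) a * x)
    (hle : ∀ p : ℕ, p.Prime → p ∣ n → m.factorization p ≤ 2 * n.factorization p - 1) :
    (interGraph (ZMod m) (ZMod n)).chromaticNumber =
      ((interGraph (ZMod m) (ZMod n)).cliqueNum : ℕ∞) := by
  have : NeZero m := ⟨by omega⟩
  have : Finite (Ideal (ZMod m)) := Finite.of_injective _ SetLike.coe_injective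
  rw [interGraph_zmod_eq_intersectionGraph hsmul]
  refine SimpleGraph.chromaticNumber_intersectionGraph_eq_cliqueNum
    (fun _ => Finset.filter_subset _ _) fun B C hB hBC hCP => ?_
  rw [ncard_deficientPrimes_idealDivisor hnm hB (hBC.trans_ssubset hCP).ne,
    ncard_deficientPrimes_idealDivisor hnm (hB.mono hBC) hCP.ne]
  exact ncard_deficientPrimes_le hle (NeZero.ne m) hBC hCP.subset

/-- For `m, n ≥ 2` with `n ∣ m`, regarding `ℤ_n` as a `ℤ_m`-module via the
natural cast, if `α_p ≤ 2β_p − 1` for every prime `p ∣ n` (where `α_p`, `β_p` are the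
multiplicities of `p` in `m`, `n`), then `G_n(ℤ_m)` is weakly perfect. -/
theorem weakly_perfect_of_le (m n : ℕ) (hm : 2 ≤ m) (hn : 2 ≤ n) (hnm : n ∣ m)
    [Module (ZMod m) (ZMod n)]
    (hsmul : ∀ (a : ZMod m) (x : ZMod n), a • x = ZMod.castHom hnm (ZMod n) a * x)
    (hle : ∀ p : ℕ, p.Prime → p ∣ n → m.factorization p ≤ 2 * n.factorization p - 1) :
    (interGraph (ZMod m) (ZMod n)).chromaticNumber =
      ((interGraph (ZMod m) (ZMod n)).cliqueNum : ℕ∞) :=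
  weakly_perfect_of_le_general m n hm hnm hsmul hle
end
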